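/- arXiv:2209.07136 — 8 statements merged into one kernel-verified Lean document; each statement's English description precedes it below -/
import Mathlib

section
/- Let q be a prime power, let F be a finite field with exactly q^2 elements, and let α ∈ F satisfy α^q + α ≠ 0. Then the set {y ∈ F : y^q + y = α^{q+1}/(α^q + α)} has exactly q elements, and every element y of this set again satisfies y^q + y ≠ 0. -/
open Polynomial

private lemma aux_roots_ncard {F : Type*} [Field F] (P : Polynomial F) (hP : P ≠ 0) :
    {x : F | P.eval x = 0}.ncard ≤ P.natDegree := by
  classical
  have hsub : {x : F | P.eval x = 0} ⊆ (P.roots.toFinset : Set F) := by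
    intro x hx
    simp only [Set.mem_setOf_eq] at hx
    simp [Polynomial.mem_roots, hP, Polynomial.IsRoot, hx]
  calc {x : F | P.eval x = 0}.ncard ≤ ((P.roots.toFinset : Set F)).ncard :=
        Set.ncard_le_ncard hsub (Set.toFinite _)
    _ = P.roots.toFinset.card := Set.ncard_coe_finset _
    _ ≤ Multiset.card P.roots := Multiset.toFinset_card_le _
    _ ≤ P.natDegree := Polynomial.card_roots' P

/-- For a prime power `q`, a finite field `F` with `q^2` elements and `α ∈ F` with
`α^q + α ≠ 0`, the set `{y ∈ F : y^q + y = α^{q+1}/(α^q + α)}` has exactly `q` elements,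
and every element `y` of this set satisfies `y^q + y ≠ 0`. -/
theorem stmt_2 (q : ℕ) (hq : IsPrimePow q) (F : Type*) [Field F] [Fintype F]
    (hF : Fintype.card F = q ^ 2) (α : F) (hα : α ^ q + α ≠ 0) :
    {y : F | y ^ q + y = α ^ (q + 1) / (α ^ q + α)}.ncard = q ∧
      ∀ y ∈ {y : F | y ^ q + y = α ^ (q + 1) / (α ^ q + α)}, y ^ q + y ≠ 0 := by
  classical
  obtain ⟨p, k, hp, hk, hpq⟩ := hq
  have hp' : p.Prime := Nat.prime_iff.mpr hp
  haveI : Fact p.Prime := ⟨hp'⟩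
  have hq2 : 2 ≤ q := by
    rw [← hpq]; calc 2 ≤ p := hp'.two_le
      _ = p ^ 1 := (pow_one p).symm
      _ ≤ p ^ k := Nat.pow_le_pow_right hp'.pos hk
  have hq0 : q ≠ 0 := by omega
  -- characteristic
  haveI hcharF : CharP F p := by
    have hr : (ringChar F).Prime := CharP.char_is_prime F (ringChar F)
    obtain ⟨n, -, hcard⟩ := FiniteField.card F (ringChar F)
    have hdvd : ringChar F ∣ p ^ (k * 2) := by
      rw [pow_mul, hpq, ← hF, hcard]
      exact dvd_pow_self _ n.ne_zero
    have : ringChar F = p :=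
      (Nat.prime_dvd_prime_iff_eq hr hp').mp (hr.dvd_of_dvd_pow hdvd)
    exact this ▸ ringChar.charP F
  have hadd : ∀ x y : F, (x + y) ^ q = x ^ q + y ^ q := by
    intro x y; rw [← hpq]; exact add_pow_char_pow ..
  have hpc : ∀ x : F, (x ^ q) ^ q = x := by
    intro x
    rw [← pow_mul, ← sq, ← hF]
    exact FiniteField.pow_card x
  -- the additive map f
  set f : F →+ F := AddMonoidHom.mk' (fun y => y ^ q + y)
    (fun x y => by
      show (x + y) ^ q + (x + y) = (x ^ q + x) + (y ^ q + y)
      rw [hadd]; ring) with hf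
  have hfa : ∀ y : F, f y = y ^ q + y := fun _ => rfl
  -- card bound for fibers
  have key : ∀ c : F, {y : F | y ^ q + y = c}.ncard ≤ q := by
    intro c
    set P : Polynomial F := X ^ q + (X - C c) with hP
    have hPne : P ≠ 0 := by
      intro h
      have : P.coeff q = 0 := by rw [h]; simp
      rw [hP] at this
      simp only [coeff_add, coeff_X_pow, if_pos rfl, coeff_sub, coeff_X, coeff_C,
        if_neg (by omega : ¬(1 = q)), if_neg hq0, sub_zero, add_zero] at this
      exact one_ne_zero this
    have hdeg : P.natDegree ≤ q := by
      refine le_trans (natDegree_add_le _ _) ?_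
      simp only [natDegree_X_pow, max_le_iff, le_refl, true_and]
      exact le_trans (natDegree_sub_le _ _) (by simp; omega)
    have hset : {y : F | y ^ q + y = c} = {x : F | P.eval x = 0} := by
      ext x
      simp only [Set.mem_setOf_eq, hP, eval_add, eval_pow, eval_X, eval_sub, eval_C]
      rw [← add_sub_assoc, sub_eq_zero]
    rw [hset]
    exact le_trans (aux_roots_ncard P hPne) hdeg
  -- the fixed-point set
  set Fq : Set F := {x : F | x ^ q = x} with hFq
  have hFq_le : Fq.ncard ≤ q := by
    set P : Polynomial F := X ^ q - X with hP
    have hPne : P ≠ 0 := by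
      intro h
      have : P.coeff q = 0 := by rw [h]; simp
      rw [hP] at this
      simp only [coeff_sub, coeff_X_pow, if_pos rfl, coeff_X,
        if_neg (by omega : ¬(1 = q)), sub_zero] at this
      exact one_ne_zero this
    have hdeg : P.natDegree ≤ q := by
      refine le_trans (natDegree_sub_le _ _) ?_
      simp; omega
    have hset : Fq = {x : F | P.eval x = 0} := by
      ext x
      simp only [hFq, Set.mem_setOf_eq, hP, eval_sub, eval_pow, eval_X, sub_eq_zero]
    rw [hset]
    exact le_trans (aux_roots_ncard P hPne) hdeg
  -- range of f is contained in Fq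
  have hrange_sub : (f.range : Set F) ⊆ Fq := by
    rintro _ ⟨y, rfl⟩
    show (f y) ^ q = f y
    rw [hfa, hadd, hpc]
    ring
  -- counting: |range| * |ker| = q^2
  have hmul : (f.range : Set F).ncard * ((f.ker : Set F)).ncard = q ^ 2 := by
    have h1 : Nat.card F = Nat.card (F ⧸ f.ker) * Nat.card f.ker :=
      AddSubgroup.card_eq_card_quotient_mul_card_addSubgroup f.ker
    have h2 : Nat.card (F ⧸ f.ker) = Nat.card f.range :=
      Nat.card_congr (QuotientAddGroup.quotientKerEquivRange f).toEquiv
    have h3 : Nat.card F = q ^ 2 := by rw [Nat.card_eq_fintype_card, hF]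
    have h4 : Nat.card f.range = (f.range : Set F).ncard := by
      rw [← Nat.card_coe_set_eq]; rfl
    have h5 : Nat.card f.ker = ((f.ker : Set F)).ncard := by
      rw [← Nat.card_coe_set_eq]; rfl
    rw [← h4, ← h5, ← h2, ← h1, h3]
  have hker_set : (f.ker : Set F) = {y : F | y ^ q + y = 0} := by
    ext y
    simp only [SetLike.mem_coe, AddMonoidHom.mem_ker, Set.mem_setOf_eq, hfa]
  have hker_le : ((f.ker : Set F)).ncard ≤ q := by rw [hker_set]; exact key 0
  have hrange_le : (f.range : Set F).ncard ≤ q :=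
    le_trans (Set.ncard_le_ncard hrange_sub (Set.toFinite _)) hFq_le
  have hmul' : (f.range : Set F).ncard * ((f.ker : Set F)).ncard = q * q := by
    rw [hmul, sq]
  have hq_pos : 0 < q := by omega
  have hrange_eq : (f.range : Set F).ncard = q := by
    by_contra hne
    have hlt : (f.range : Set F).ncard < q := lt_of_le_of_ne hrange_le hne
    have h1 : (f.range : Set F).ncard * ((f.ker : Set F)).ncard
        ≤ (f.range : Set F).ncard * q := Nat.mul_le_mul_left _ hker_le
    have h2 : (f.range : Set F).ncard * q < q * q :=
      (Nat.mul_lt_mul_right hq_pos).mpr hlt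
    exact Nat.lt_irrefl _ (hmul' ▸ lt_of_le_of_lt h1 h2)
  have hker_eq : ((f.ker : Set F)).ncard = q := by
    apply Nat.eq_of_mul_eq_mul_left hq_pos
    rw [← hrange_eq] at hmul' ⊢
    rw [hmul']
  -- range = Fq
  have hRFq : (f.range : Set F) = Fq :=
    Set.eq_of_subset_of_ncard_le hrange_sub (by rw [hrange_eq]; exact hFq_le)
      (Set.toFinite _)
  -- β is fixed by x ^ q
  set β : F := α ^ (q + 1) / (α ^ q + α) with hβ
  have hα0 : α ≠ 0 := by
    intro h; apply hα; rw [h, zero_pow hq0, add_zero]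
  have hβne : β ≠ 0 := div_ne_zero (pow_ne_zero _ hα0) hα
  have hβFq : β ∈ Fq := by
    show β ^ q = β
    rw [hβ, div_pow, ← pow_mul, hadd, hpc]
    have hnum : α ^ ((q + 1) * q) = α ^ (q + 1) := by
      rw [add_mul, one_mul, pow_add, pow_mul, hpc, pow_succ]
      ring
    rw [hnum, add_comm (α ^ q) α]
  -- existence of a solution
  obtain ⟨y₀, hy₀⟩ : ∃ y₀ : F, f y₀ = β := by
    have : β ∈ (f.range : Set F) := hRFq ▸ hβFq
    exact this
  -- the solution set is a coset of the kernel
  have hcoset : {y : F | y ^ q + y = β} = (fun z => z + y₀) '' (f.ker : Set F) := by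
    ext z
    simp only [Set.mem_setOf_eq, Set.mem_image, SetLike.mem_coe, AddMonoidHom.mem_ker]
    constructor
    · intro hz
      refine ⟨z - y₀, ?_, by ring⟩
      rw [map_sub, hy₀, hfa z, hz, sub_self]
    · rintro ⟨w, hw, rfl⟩
      have : f (w + y₀) = β := by rw [map_add, hw, hy₀, zero_add]
      rw [← hfa]; exact this
  have hmain : {y : F | y ^ q + y = β}.ncard = q := by
    rw [hcoset, Set.ncard_image_of_injective _ (add_left_injective y₀), hker_eq]
  refine ⟨hmain, ?_⟩
  intro y hy
  rw [Set.mem_setOf_eq] at hy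
  rw [hy]
  exact hβne
end

section
/- Let q be an odd prime power and let F be a finite field with exactly q^2 elements. For every β ∈ F with β ≠ 0 and β^q = β, the set S_β = {α ∈ F : α^q + α ≠ 0 and α^{q+1} = β·(α^q + α)} has exactly q elements. -/
/-- Let `q` be an odd prime power and `F` a finite field with `q^2` elements. For every
nonzero `β ∈ F` with `β^q = β`, the set
`S_β = {α ∈ F : α^q + α ≠ 0 ∧ α^{q+1} = β(α^q + α)}` has exactly `q` elements. -/
theorem stmt_3 (q : ℕ) (hq : IsPrimePow q) (hodd : Odd q) (F : Type*) [Field F] [Fintype F]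
    (hF : Fintype.card F = q ^ 2) (β : F) (hβ : β ≠ 0) (hβq : β ^ q = β) :
    {α : F | α ^ q + α ≠ 0 ∧ α ^ (q + 1) = β * (α ^ q + α)}.ncard = q := by
  classical
  obtain ⟨p, k, hp, hk, rfl⟩ := hq
  have hp' : p.Prime := hp.nat_prime
  set q := p ^ k with hqdef
  have hq1 : 1 < q := Nat.one_lt_pow hk.ne' hp'.one_lt
  -- characteristic of F is p
  have hchar : CharP F p := by
    obtain ⟨p', hcp⟩ := CharP.exists F
    haveI := hcp
    have hp'prime : p'.Prime := (CharP.char_is_prime F p')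
    haveI : Fact p'.Prime := ⟨hp'prime⟩
    obtain ⟨n, hcard⟩ := FiniteField.card F p'
    have : (p' : ℕ) ^ (n : ℕ) = p ^ (2 * k) := by
      rw [← hcard.2, hF, hqdef, ← pow_mul, mul_comm]
    have hdvd : p' ∣ p := by
      have h1 : p' ∣ p' ^ (n : ℕ) := dvd_pow_self p' n.2.ne'
      rw [this] at h1
      exact hp'prime.dvd_of_dvd_pow h1
    have : p' = p := ((Nat.prime_dvd_prime_iff_eq hp'prime hp').mp hdvd)
    rwa [← this]
  haveI := hchar
  have hfrob : ∀ x y : F, (x - y) ^ q = x ^ q - y ^ q := by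
    intro x y
    haveI : Fact p.Prime := ⟨hp'⟩
    rw [hqdef]
    exact sub_pow_char_pow x y k
  -- key algebraic identity
  have hkey : ∀ α : F, (α - β) ^ (q + 1) = α ^ (q + 1) - β * (α ^ q + α) + β ^ 2 := by
    intro α
    rw [pow_succ, hfrob α β, hβq, pow_succ]
    ring
  have hq0 : q ≠ 0 := by omega
  -- rewrite the set
  have hset : {α : F | α ^ q + α ≠ 0 ∧ α ^ (q + 1) = β * (α ^ q + α)}
      = ((fun γ : F => γ + β) '' {γ : F | γ ^ (q + 1) = β ^ 2}) \ {0} := by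
    ext α
    simp only [Set.mem_setOf_eq, Set.mem_diff, Set.mem_image, Set.mem_singleton_iff]
    constructor
    · rintro ⟨h1, h2⟩
      refine ⟨⟨α - β, ?_, by ring⟩, ?_⟩
      · rw [hkey α]; linear_combination h2
      · rintro rfl
        exact h1 (by simp [zero_pow hq0])
    · rintro ⟨⟨γ, hγ, rfl⟩, h0⟩
      have hγ' : (γ + β - β) ^ (q + 1) = β ^ 2 := by simpa using hγ
      have h2 : (γ + β) ^ (q + 1) = β * ((γ + β) ^ q + (γ + β)) := by
        have := hkey (γ + β)
        rw [hγ'] at this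
        linear_combination -this
      refine ⟨?_, h2⟩
      intro hT
      rw [hT, mul_zero, pow_eq_zero_iff (by omega)] at h2
      exact h0 h2
  -- primitive (q+1)-th root of unity
  obtain ⟨g, hg⟩ := IsCyclic.exists_generator (α := Fˣ)
  have hog : orderOf g = q ^ 2 - 1 := by
    rw [orderOf_eq_card_of_forall_mem_zpowers hg, Nat.card_eq_fintype_card, Fintype.card_units, hF]
  have hfact : q ^ 2 - 1 = (q + 1) * (q - 1) := by
    have := Nat.sq_sub_sq q 1
    simpa using this
  have hζord : orderOf (g ^ (q - 1)) = q + 1 := by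
    rw [orderOf_pow, hog, hfact, Nat.gcd_eq_right ⟨q + 1, by ring⟩,
      Nat.mul_div_cancel _ (by omega)]
  have hζ : IsPrimitiveRoot ((g ^ (q - 1) : Fˣ) : F) (q + 1) := by
    rw [IsPrimitiveRoot.coe_units_iff, ← hζord]
    exact IsPrimitiveRoot.orderOf _
  -- β^(q+1) = β^2
  have hβpow : β ^ (q + 1) = β ^ 2 := by
    rw [pow_succ, hβq, sq]
  -- count roots of x^(q+1) = β^2
  have hβ2 : (β : F) ^ 2 ≠ 0 := pow_ne_zero _ hβ
  have hTfin : {γ : F | γ ^ (q + 1) = β ^ 2} =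
      ↑(Polynomial.nthRoots (q + 1) (β ^ 2)).toFinset := by
    ext γ
    simp [Polynomial.mem_nthRoots (by omega : 0 < q + 1)]
  have hTcard : {γ : F | γ ^ (q + 1) = β ^ 2}.ncard = q + 1 := by
    rw [hTfin, Set.ncard_coe_finset, Multiset.toFinset_card_of_nodup
      (hζ.nthRoots_nodup hβ2), hζ.card_nthRoots, if_pos ⟨β, hβpow⟩]
  -- put it together
  rw [hset]
  have himg : ((fun γ : F => γ + β) '' {γ : F | γ ^ (q + 1) = β ^ 2}).ncard = q + 1 := by
    rw [Set.ncard_image_of_injective _ (add_left_injective β), hTcard]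
  have h0mem : (0 : F) ∈ (fun γ : F => γ + β) '' {γ : F | γ ^ (q + 1) = β ^ 2} := by
    refine ⟨-β, ?_, by ring⟩
    have heven : Even (q + 1) := by
      obtain ⟨m, hm⟩ := hodd
      exact ⟨m + 1, by omega⟩
    simp only [Set.mem_setOf_eq]
    rw [heven.neg_pow, hβpow]
  have hfin : ((fun γ : F => γ + β) '' {γ : F | γ ^ (q + 1) = β ^ 2}).Finite :=
    Set.toFinite _
  rw [Set.ncard_diff_singleton_of_mem h0mem, himg]
  omega
end

section
/- Let q be an odd prime power and let F be a finite field with exactly q^2 elements. Then the map sending α to α^{q+1}/(α^q + α), defined on the set {α ∈ F : α^q + α ≠ 0}, has image exactly equal to the set {β ∈ F : β ≠ 0 and β^q = β} of nonzero elements of the subfield with q elements. -/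
open Polynomial Finset

/-- Any finset whose elements are all roots of a nonzero polynomial of `natDegree ≤ n`
has cardinality at most `n`. -/
lemma my_card_le_of_roots {F : Type*} [Field F] [DecidableEq F] (g : Polynomial F)
    (hg : g ≠ 0) (n : ℕ) (hdeg : g.natDegree ≤ n) (T : Finset F)
    (hT : ∀ x ∈ T, g.IsRoot x) : T.card ≤ n := by
  calc T.card ≤ g.roots.toFinset.card := by
        apply Finset.card_le_card
        intro x hx
        exact Multiset.mem_toFinset.mpr ((Polynomial.mem_roots').mpr ⟨hg, hT x hx⟩)
    _ ≤ Multiset.card g.roots := Multiset.toFinset_card_le _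
    _ ≤ g.natDegree := g.card_roots'
    _ ≤ n := hdeg

/-- Let `q` be an odd prime power and `F` a finite field with `q^2` elements. The image of
`α ↦ α^{q+1}/(α^q + α)` on `{α : α^q + α ≠ 0}` is exactly the set of nonzero elements of
the subfield with `q` elements, i.e. `{β : β ≠ 0 ∧ β^q = β}`. -/
theorem stmt_4 (q : ℕ) (hq : IsPrimePow q) (hodd : Odd q) (F : Type*) [Field F] [Fintype F]
    (hF : Fintype.card F = q ^ 2) :
    (fun α : F => α ^ (q + 1) / (α ^ q + α)) '' {α : F | α ^ q + α ≠ 0} =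
      {β : F | β ≠ 0 ∧ β ^ q = β} := by
  classical
  have hq2 : 2 ≤ q := hq.two_le
  obtain ⟨p, k, hp, hk, hpk⟩ := hq
  have hpn : p.Prime := hp.nat_prime
  haveI : Fact p.Prime := ⟨hpn⟩
  -- characteristic
  haveI hcharR : CharP F (ringChar F) := ringChar.charP F
  have hrp : (ringChar F).Prime := CharP.char_is_prime F _
  have hdvd : ringChar F ∣ q ^ 2 := by
    rw [← hF]
    exact ringChar.dvd (FiniteField.cast_card_eq_zero F)
  have hrpp : ringChar F = p := by
    have : ringChar F ∣ p := by
      have : ringChar F ∣ p ^ (k * 2) := by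
        rwa [pow_mul, hpk]
      exact hrp.dvd_of_dvd_pow this
    exact ((Nat.prime_dvd_prime_iff_eq hrp hpn).mp this)
  haveI hchar : CharP F p := hrpp ▸ hcharR
  -- Frobenius-type identities
  have hadd : ∀ x y : F, (x + y) ^ q = x ^ q + y ^ q := by
    intro x y
    rw [← hpk]
    exact add_pow_char_pow x y p k
  have hpow : ∀ x : F, x ^ q ^ 2 = x := by
    intro x
    rw [← hF]
    exact FiniteField.pow_card x
  set φ : F → F := fun α => α ^ (q + 1) / (α ^ q + α) with hφ
  -- finsets
  set D : Finset F := univ.filter (fun α : F => α ^ q + α ≠ 0) with hD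
  set I : Finset F := D.image φ with hI
  set Sf : Finset F := univ.filter (fun β : F => β ≠ 0 ∧ β ^ q = β) with hSf
  -- forward inclusion
  have hmem : ∀ α : F, α ^ q + α ≠ 0 → φ α ≠ 0 ∧ (φ α) ^ q = φ α := by
    intro α hα
    have hα0 : α ≠ 0 := by
      rintro rfl
      apply hα
      simp [zero_pow (by omega : q ≠ 0)]
    constructor
    · exact div_ne_zero (pow_ne_zero _ hα0) hα
    · rw [hφ]
      simp only
      rw [div_pow]
      congr 1
      · rw [← pow_mul]
        have h1 : (q + 1) * q = q ^ 2 + q := by ring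
        rw [h1, pow_add, hpow α, ← pow_succ']
      · rw [hadd, ← pow_mul, ← pow_two, hpow α, add_comm]
  have hIS : I ⊆ Sf := by
    intro β hβ
    rw [hI] at hβ
    obtain ⟨α, hαD, rfl⟩ := Finset.mem_image.mp hβ
    rw [hD] at hαD
    have hα := (Finset.mem_filter.mp hαD).2
    rw [hSf, Finset.mem_filter]
    exact ⟨Finset.mem_univ _, hmem α hα⟩
  -- fiber bound: each fiber of φ on D has at most q elements
  have hfiber : ∀ β ∈ I, (D.filter fun α => φ α = β).card ≤ q := by
    intro β _
    set g : Polynomial F := X ^ q - C β * X ^ (q - 1) - C β with hg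
    have hgcoeff : g.coeff q = 1 := by
      rw [hg]
      simp only [coeff_sub, coeff_X_pow, coeff_C_mul, coeff_C]
      have h1 : ¬ q = q - 1 := by omega
      have h2 : ¬ q = 0 := by omega
      simp [h1, h2]
    have hg0 : g ≠ 0 := fun h => by simp [h] at hgcoeff
    have hgd : g.natDegree ≤ q := by
      rw [hg]
      compute_degree
    apply my_card_le_of_roots g hg0 q hgd
    intro α hα
    rw [Finset.mem_filter] at hα
    obtain ⟨hαD, hφα⟩ := hα
    rw [hD, Finset.mem_filter] at hαD
    have hden : α ^ q + α ≠ 0 := hαD.2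
    have hα0 : α ≠ 0 := by
      rintro rfl
      apply hden
      simp [zero_pow (by omega : q ≠ 0)]
    have heq : α ^ (q + 1) = β * (α ^ q + α) := by
      rw [← hφα, hφ]
      field_simp
    have key : α ^ q = β * α ^ (q - 1) + β := by
      apply mul_right_cancel₀ hα0
      have e1 : α ^ (q - 1) * α = α ^ q := by
        rw [← pow_succ]
        congr 1
        omega
      calc α ^ q * α = α ^ (q + 1) := by rw [pow_succ]
        _ = β * (α ^ q + α) := heq
        _ = (β * α ^ (q - 1) + β) * α := by rw [add_mul, mul_assoc, e1]; ring
    rw [hg]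
    simp only [IsRoot, eval_sub, eval_pow, eval_X, eval_mul, eval_C]
    rw [key]
    ring
  -- kernel bound
  have hker : (univ.filter fun α : F => α ^ q + α = 0).card ≤ q := by
    set g : Polynomial F := X ^ q + X with hg
    have hgcoeff : g.coeff q = 1 := by
      rw [hg]
      simp only [coeff_add, coeff_X_pow, coeff_X]
      have h1 : ¬ (1 : ℕ) = q := by omega
      simp [h1]
    have hg0 : g ≠ 0 := fun h => by simp [h] at hgcoeff
    have hgd : g.natDegree ≤ q := by
      rw [hg]
      compute_degree
      omega
    apply my_card_le_of_roots g hg0 q hgd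
    intro α hα
    rw [Finset.mem_filter] at hα
    rw [hg]
    simp [IsRoot, hα.2]
  -- cardinality of D
  have hDcard : D.card + (univ.filter fun α : F => α ^ q + α = 0).card = q ^ 2 := by
    have h := Finset.card_filter_add_card_filter_not (s := (univ : Finset F))
      (p := fun α : F => α ^ q + α ≠ 0)
    have h2 : (univ.filter fun a : F => ¬ (a ^ q + a ≠ 0)) =
        univ.filter fun α : F => α ^ q + α = 0 :=
      Finset.filter_congr (fun x _ => by simp)
    rw [h2] at h
    rw [hD, ← hF, ← Finset.card_univ (α := F)]
    exact h
  -- D.card ≤ q * I.card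
  have hDI : D.card ≤ q * I.card := by
    rw [hI]
    exact Finset.card_le_mul_card_image D q hfiber
  -- q - 1 ≤ I.card
  have hqq : q * (q - 1) + q = q ^ 2 := by
    obtain ⟨m, rfl⟩ : ∃ m, q = m + 1 := ⟨q - 1, by omega⟩
    simp only [Nat.add_sub_cancel]
    ring
  have hIcard : q - 1 ≤ I.card := by
    have h1 : q * (q - 1) ≤ q * I.card := by omega
    exact Nat.le_of_mul_le_mul_left h1 (by omega)
  -- Sf.card ≤ q - 1
  have hScard : Sf.card ≤ q - 1 := by
    have h0 : (0 : F) ∉ Sf := by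
      rw [hSf]
      simp
    have hins : (insert (0 : F) Sf).card = Sf.card + 1 := Finset.card_insert_of_notMem h0
    have hbound : (insert (0 : F) Sf).card ≤ q := by
      set g : Polynomial F := X ^ q - X with hg
      have hgcoeff : g.coeff q = 1 := by
        rw [hg]
        simp only [coeff_sub, coeff_X_pow, coeff_X]
        have h1 : ¬ (1 : ℕ) = q := by omega
        simp [h1]
      have hg0 : g ≠ 0 := fun h => by simp [h] at hgcoeff
      have hgd : g.natDegree ≤ q := by
        rw [hg]
        compute_degree
        · exact max_le le_rfl (by omega)
      apply my_card_le_of_roots g hg0 q hgd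
      intro x hx
      rcases Finset.mem_insert.mp hx with rfl | hx
      · rw [hg]
        simp [IsRoot, zero_pow (by omega : q ≠ 0)]
      · rw [hSf, Finset.mem_filter] at hx
        rw [hg]
        simp [IsRoot, hx.2.2]
    omega
  -- conclude finset equality
  have hfin : I = Sf := Finset.eq_of_subset_of_card_le hIS (by omega)
  -- translate back to sets
  have h1 : φ '' {α : F | α ^ q + α ≠ 0} = (I : Set F) := by
    rw [hI, Finset.coe_image]
    rw [hD]
    ext x
    simp
  have h2 : {β : F | β ≠ 0 ∧ β ^ q = β} = (Sf : Set F) := by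
    rw [hSf]
    ext x
    simp
  rw [h1, h2, hfin]
end

section
/- Let q be an odd prime power, let F be a finite field with exactly q^2 elements, and let t ∈ F with t ≠ 0 and t^q = t. Then the image set {α^{q+1} : α ∈ F, α^q + α = t} has exactly (q+1)/2 elements. -/
open Polynomial Finset

private lemma aux_card_root_le {F : Type*} [Field F] [Fintype F] [DecidableEq F]
    (P : Polynomial F) (hP : P ≠ 0) :
    (Finset.univ.filter fun x => P.eval x = 0).card ≤ P.natDegree := by
  have h1 : (Finset.univ.filter fun x => P.eval x = 0) ⊆ P.roots.toFinset := by
    intro x hx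
    simp only [Finset.mem_filter, Finset.mem_univ, true_and] at hx
    simpa [Multiset.mem_toFinset, Polynomial.mem_roots hP, Polynomial.IsRoot] using hx
  exact (Finset.card_le_card h1).trans
    ((Multiset.toFinset_card_le _).trans (Polynomial.card_roots' P))

/-- Let `q` be an odd prime power, `F` a finite field with `q^2` elements and `t ∈ F`
nonzero with `t^q = t`. The image `{α^{q+1} : α^q + α = t}` has exactly `(q+1)/2`
elements. -/
theorem stmt_7 (q : ℕ) (hq : IsPrimePow q) (hodd : Odd q) (F : Type*) [Field F] [Fintype F]
    (hF : Fintype.card F = q ^ 2) (t : F) (ht0 : t ≠ 0) (htq : t ^ q = t) :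
    ((fun α : F => α ^ (q + 1)) '' {α : F | α ^ q + α = t}).ncard = (q + 1) / 2 := by
  classical
  obtain ⟨p, n, hp, hn, rfl⟩ := hq
  have hpp : Nat.Prime p := hp.nat_prime
  haveI : Fact p.Prime := ⟨hpp⟩
  set q := p ^ n with hqdef
  -- characteristics
  have hq1 : 1 < q := Nat.one_lt_pow hn.ne' hpp.one_lt
  have hq0 : 0 < q := by omega
  haveI hRC : CharP F (ringChar F) := ringChar.charP F
  obtain ⟨m, hrprime, hcard⟩ := FiniteField.card F (ringChar F)
  have hpr : p = ringChar F := by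
    have hdvd : p ∣ ringChar F ^ (m : ℕ) := by
      rw [← hcard, hF, hqdef, ← pow_mul]
      exact dvd_pow_self p (by positivity)
    exact (Nat.prime_dvd_prime_iff_eq hpp hrprime).mp (hpp.dvd_of_dvd_pow hdvd)
  haveI hchar : CharP F p := by rw [hpr]; exact ringChar.charP F
  have hp2 : p ≠ 2 := by
    rintro rfl
    have : Even q := Nat.even_pow.mpr ⟨even_two, hn.ne'⟩
    exact (Nat.not_even_iff_odd.mpr hodd) this
  have two_ne : (2 : F) ≠ 0 := by
    intro h
    have : (p : ℕ) ∣ 2 := by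
      have := (CharP.cast_eq_zero_iff F p 2).mp (by exact_mod_cast h)
      exact this
    exact hp2 ((Nat.prime_dvd_prime_iff_eq hpp Nat.prime_two).mp this)
  -- Frobenius additivity
  have hadd : ∀ a b : F, (a + b) ^ q = a ^ q + b ^ q := fun a b => add_pow_char_pow a b p n
  have hsub : ∀ a b : F, (a - b) ^ q = a ^ q - b ^ q := fun a b => sub_pow_char_pow (p := p) a b n
  have hqq : ∀ x : F, (x ^ q) ^ q = x := by
    intro x
    rw [← pow_mul, ← sq, ← hF]
    exact FiniteField.pow_card x
  -- the three finsets
  set K : Finset F := Finset.univ.filter fun x => x ^ q + x = 0 with hK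
  set T : Finset F := Finset.univ.filter fun x => x ^ q = x with hT
  set R : Finset F := Finset.univ.image fun x : F => x ^ q + x with hR
  have hKle : K.card ≤ q := by
    have hdeg : (X ^ q + X : F[X]).natDegree = q := by
      compute_degree!
      rw [if_neg (show ¬ 1 = q by omega)]
      norm_num
    have hne : (X ^ q + X : F[X]) ≠ 0 := by
      intro h; rw [h] at hdeg; simp at hdeg; omega
    have := aux_card_root_le (X ^ q + X : F[X]) hne
    rw [hdeg] at this
    refine le_trans (le_of_eq ?_) this
    congr 1
    ext x; simp [hK]
  have hTle : T.card ≤ q := by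
    have hdeg : (X ^ q - X : F[X]).natDegree = q := by
      compute_degree!
      rw [if_neg (show ¬ 1 = q by omega)]
      norm_num
    have hne : (X ^ q - X : F[X]) ≠ 0 := by
      intro h; rw [h] at hdeg; simp at hdeg; omega
    have := aux_card_root_le (X ^ q - X : F[X]) hne
    rw [hdeg] at this
    refine le_trans (le_of_eq ?_) this
    congr 1
    ext x; simp [hT, sub_eq_zero]
  have hRT : R ⊆ T := by
    intro b hb
    rw [hR, Finset.mem_image] at hb
    obtain ⟨x, -, rfl⟩ := hb
    rw [hT, Finset.mem_filter]
    refine ⟨Finset.mem_univ _, ?_⟩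
    rw [hadd, hqq, add_comm]
  -- fibers of the trace map all have size K.card
  have hfib : ∀ b ∈ R, (Finset.univ.filter fun x : F => x ^ q + x = b).card = K.card := by
    intro b hb
    rw [hR, Finset.mem_image] at hb
    obtain ⟨x₀, -, hx₀⟩ := hb
    apply Finset.card_bij' (fun x _ => x - x₀) (fun y _ => y + x₀)
    · intro x hx
      rw [Finset.mem_filter] at hx ⊢
      refine ⟨Finset.mem_univ _, ?_⟩
      rw [hsub]
      linear_combination hx.2 - hx₀
    · intro y hy
      rw [Finset.mem_filter] at hy ⊢
      refine ⟨Finset.mem_univ _, ?_⟩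
      rw [hadd]
      linear_combination hy.2 + hx₀
    · intro x _; ring
    · intro y _; ring
  -- the product formula
  have hsum : q ^ 2 = R.card * K.card := by
    have h1 := Finset.card_eq_sum_card_image (fun x : F => x ^ q + x) Finset.univ
    rw [Finset.card_univ, hF] at h1
    rw [h1, ← hR]
    rw [Finset.sum_congr rfl (fun b hb => hfib b hb), Finset.sum_const, smul_eq_mul]
  have hK0 : 0 < K.card := by
    refine Finset.card_pos.mpr ⟨0, ?_⟩
    rw [hK, Finset.mem_filter]
    exact ⟨Finset.mem_univ _, by simp [zero_pow hq0.ne']⟩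
  have hRle : R.card ≤ q := le_trans (Finset.card_le_card hRT) hTle
  have hRcard : R.card = q := by
    have h2 : q * q ≤ R.card * q := by
      calc q * q = q ^ 2 := (sq q).symm
        _ = R.card * K.card := hsum
        _ ≤ R.card * q := Nat.mul_le_mul_left _ hKle
    have := Nat.le_of_mul_le_mul_right h2 hq0
    omega
  -- t is in the range
  have hReqT : R = T := Finset.eq_of_subset_of_card_le hRT (by omega)
  have htR : t ∈ R := by
    rw [hReqT, hT, Finset.mem_filter]
    exact ⟨Finset.mem_univ _, htq⟩
  -- the trace fiber over t
  set s : Finset F := Finset.univ.filter fun x : F => x ^ q + x = t with hs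
  have hKcard : K.card = q := by
    have h := hsum
    rw [hRcard, sq] at h
    exact (Nat.eq_of_mul_eq_mul_left hq0 h.symm)
  have hscard : s.card = q := by
    rw [hs, hfib t htR, hKcard]
  -- norm map and its image on the fiber
  set f : F → F := fun x => x ^ (q + 1) with hf
  set M : Finset F := s.image f with hM
  -- reduce goal to M.card
  have hgoal : ((fun α : F => α ^ (q + 1)) '' {α : F | α ^ q + α = t}) = ↑M := by
    ext c
    simp only [hM, hs, hf, Finset.coe_image, Finset.coe_filter, Finset.mem_univ, true_and,
      Set.mem_image, Set.mem_setOf_eq]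
  rw [hgoal, Set.ncard_coe_finset]
  -- membership of t/2 in s
  have h2q : (2 : F) ^ q = 2 := by
    have h := hadd 1 1
    norm_num at h
    exact h
  have hhalf : (t / 2) ^ q = t / 2 := by
    rw [div_pow, h2q, htq]
  have haddhalf : t / 2 + t / 2 = t := by
    rw [← add_div, ← two_mul]
    exact mul_div_cancel_left₀ t two_ne
  have hsubhalf : t - t / 2 = t / 2 := by
    rw [eq_comm, eq_sub_iff_add_eq, haddhalf]
  have hhalfmem : t / 2 ∈ s := by
    rw [hs, Finset.mem_filter]
    exact ⟨Finset.mem_univ _, by rw [hhalf, haddhalf]⟩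
  set c₀ : F := f (t / 2) with hc₀
  have hc₀M : c₀ ∈ M := Finset.mem_image_of_mem f hhalfmem
  -- conjugation in s
  have hconj : ∀ x ∈ s, (t - x) ∈ s ∧ f (t - x) = f x := by
    intro x hx
    rw [hs, Finset.mem_filter] at hx
    have hx2 := hx.2
    constructor
    · rw [hs, Finset.mem_filter]
      refine ⟨Finset.mem_univ _, ?_⟩
      rw [hsub, htq]
      linear_combination -hx2
    · rw [hf]
      simp only [pow_succ]
      rw [hsub, htq]
      have hxq : x ^ q = t - x := by linear_combination hx2
      rw [hxq]
      ring
  -- fibers of f on s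
  have hfiber2 : ∀ x ∈ s, ∀ y ∈ s, f x = f y → x = y ∨ x = t - y := by
    intro x hx y hy hfxy
    rw [hs, Finset.mem_filter] at hx hy
    have hxq : x ^ q = t - x := by linear_combination hx.2
    have hyq : y ^ q = t - y := by linear_combination hy.2
    have h1 : (t - x) * x = (t - y) * y := by
      have := hfxy
      rw [hf] at this
      simp only [pow_succ] at this
      rw [hxq, hyq] at this
      exact this
    have h2 : (x - y) * (x - (t - y)) = 0 := by linear_combination -h1
    rcases mul_eq_zero.mp h2 with h | h
    · left; exact sub_eq_zero.mp h
    · right; exact sub_eq_zero.mp h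
  -- fiber cards
  have hfibcard : ∀ c ∈ M, (s.filter fun x => f x = c).card = if c = c₀ then 1 else 2 := by
    intro c hc
    rw [hM, Finset.mem_image] at hc
    obtain ⟨y, hy, hfy⟩ := hc
    by_cases hcc : c = c₀
    · rw [if_pos hcc]
      have : (s.filter fun x => f x = c) = {t / 2} := by
        ext x
        simp only [Finset.mem_filter, Finset.mem_singleton]
        constructor
        · rintro ⟨hxs, hfx⟩
          have := hfiber2 x hxs (t / 2) hhalfmem (by rw [hfx, hcc])
          rcases this with h | h
          · exact h
          · rw [h, hsubhalf]
        · rintro rfl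
          exact ⟨hhalfmem, by rw [← hc₀, hcc]⟩
      rw [this, Finset.card_singleton]
    · rw [if_neg hcc]
      have hyne : y ≠ t - y := by
        intro h
        have hy2 : y = t / 2 := by
          rw [eq_div_iff two_ne]
          linear_combination h
        rw [hy2] at hfy
        exact hcc (by rw [← hfy, hc₀])
      have : (s.filter fun x => f x = c) = {y, t - y} := by
        ext x
        simp only [Finset.mem_filter, Finset.mem_insert, Finset.mem_singleton]
        constructor
        · rintro ⟨hxs, hfx⟩
          exact hfiber2 x hxs y hy (by rw [hfx, hfy])
        · rintro (rfl | rfl)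
          · exact ⟨hy, hfy⟩
          · obtain ⟨h1, h2⟩ := hconj y hy
            exact ⟨h1, by rw [h2, hfy]⟩
      rw [this, Finset.card_insert_of_notMem (by simpa using hyne), Finset.card_singleton]
  -- count
  have hcount : s.card = ∑ c ∈ M, (s.filter fun x => f x = c).card :=
    Finset.card_eq_sum_card_image f s
  rw [Finset.sum_congr rfl hfibcard] at hcount
  rw [← Finset.add_sum_erase _ _ hc₀M, if_pos rfl] at hcount
  have herase : ∑ c ∈ M.erase c₀, (if c = c₀ then 1 else 2) = 2 * (M.card - 1) := by
    rw [Finset.sum_congr rfl (fun c hc => if_neg (Finset.ne_of_mem_erase hc))]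
    rw [Finset.sum_const, smul_eq_mul, Finset.card_erase_of_mem hc₀M]
    ring
  rw [herase, hscard] at hcount
  have hM1 : 1 ≤ M.card := Finset.card_pos.mpr ⟨c₀, hc₀M⟩
  omega
end

section
/- Let q be an odd prime power, let F be a finite field with exactly q^2 elements, and let β₁ ∈ F with β₁ ≠ 0 and β₁^q = β₁. Then the number of elements α ∈ F with α^q + α ≠ 0 such that the set {y ∈ F : y^q + y = α^{q+1}/(α^q + α) and y^{q+1} = β₁·(α^{q+1}/(α^q + α))} has exactly one element is equal to q. -/
open Polynomial

lemma aux_roots_bound {F : Type*} [Field F] (f : F[X]) (hf : f ≠ 0) :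
    {x : F | f.eval x = 0}.ncard ≤ f.natDegree := by
  classical
  have h : {x : F | f.eval x = 0} = ↑f.roots.toFinset := by
    ext x
    simp [Polynomial.mem_roots, hf, Polynomial.IsRoot]
  rw [h, Set.ncard_coe_finset]
  exact le_trans (f.roots.toFinset_card_le) (Polynomial.card_roots' f)

lemma aux_fiber_count {F : Type*} [Field F] [Fintype F] (q : ℕ) (hq2 : 2 ≤ q)
    (hF : Fintype.card F = q ^ 2)
    (hadd : ∀ x y : F, (x + y) ^ q = x ^ q + y ^ q)
    (c : F) (hc : c ^ q = c) :
    {x : F | x ^ q + x = c}.ncard = q := by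
  classical
  set T : F →+ F := AddMonoidHom.mk' (fun x => x ^ q + x)
    (by intro a b; simp only [hadd a b]; ring) with hT
  have hTapp : ∀ x : F, T x = x ^ q + x := fun x => rfl
  have hqq : ∀ x : F, (x ^ q) ^ q = x := by
    intro x
    rw [← pow_mul, ← sq, ← hF, FiniteField.pow_card]
  -- kernel bound
  have hker : (T.ker : Set F).ncard ≤ q := by
    have hsub : (T.ker : Set F) ⊆ {x : F | (X ^ q + X : F[X]).eval x = 0} := by
      intro x hx
      have : x ^ q + x = 0 := hx
      simp [this]
    have hne : (X ^ q + X : F[X]) ≠ 0 := by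
      intro h
      have h' := congrArg (fun f => Polynomial.coeff f q) h
      simp only [Polynomial.coeff_add, Polynomial.coeff_X_pow, Polynomial.coeff_X,
        Polynomial.coeff_zero, if_pos rfl, if_neg (by omega : ¬ (1 = q))] at h'
      simp at h'
    have hdeg : (X ^ q + X : F[X]).natDegree ≤ q := by
      refine le_trans (Polynomial.natDegree_add_le _ _) ?_
      simp [Polynomial.natDegree_X_pow]
      omega
    exact le_trans (Set.ncard_le_ncard hsub (Set.toFinite _))
      (le_trans (aux_roots_bound _ hne) hdeg)
  -- subfield bound
  have hFq : ({x : F | x ^ q = x}).ncard ≤ q := by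
    have hsub : {x : F | x ^ q = x} ⊆ {x : F | (X ^ q - X : F[X]).eval x = 0} := by
      intro x hx
      simp only [Set.mem_setOf_eq] at hx ⊢
      simp [hx]
    have hne : (X ^ q - X : F[X]) ≠ 0 := by
      intro h
      have h' := congrArg (fun f => Polynomial.coeff f q) h
      simp only [Polynomial.coeff_sub, Polynomial.coeff_X_pow, Polynomial.coeff_X,
        Polynomial.coeff_zero, if_pos rfl, if_neg (by omega : ¬ (1 = q))] at h'
      simp at h'
    have hdeg : (X ^ q - X : F[X]).natDegree ≤ q := by
      refine le_trans (Polynomial.natDegree_sub_le _ _) ?_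
      simp [Polynomial.natDegree_X_pow]
      omega
    exact le_trans (Set.ncard_le_ncard hsub (Set.toFinite _))
      (le_trans (aux_roots_bound _ hne) hdeg)
  -- range inside subfield
  have hrsub : (T.range : Set F) ⊆ {x : F | x ^ q = x} := by
    rintro _ ⟨x, rfl⟩
    show (x ^ q + x) ^ q = x ^ q + x
    rw [hadd, hqq]
    ring
  -- cardinality product
  have hmul : Nat.card T.ker * Nat.card T.range = q * q := by
    have h1 : Nat.card F = Nat.card (F ⧸ T.ker) * Nat.card T.ker :=
      AddSubgroup.card_eq_card_quotient_mul_card_addSubgroup T.ker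
    have h2 : Nat.card (F ⧸ T.ker) = Nat.card T.range :=
      Nat.card_congr (QuotientAddGroup.quotientKerEquivRange T).toEquiv
    rw [h2] at h1
    rw [mul_comm, ← h1, Nat.card_eq_fintype_card, hF, sq]
  have hck : Nat.card T.ker = (T.ker : Set F).ncard :=
    Nat.card_coe_set_eq (T.ker : Set F)
  have hcr : Nat.card T.range = (T.range : Set F).ncard :=
    Nat.card_coe_set_eq (T.range : Set F)
  have hkern : Nat.card T.ker ≤ q := by rw [hck]; exact hker
  have hrngn : Nat.card T.range ≤ q := by
    rw [hcr]
    exact le_trans (Set.ncard_le_ncard hrsub (Set.toFinite _)) hFq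
  have hq0 : 0 < q := by omega
  have hrngq : Nat.card T.range = q := by
    have h1 : q * q ≤ q * Nat.card T.range := by
      calc q * q = Nat.card T.ker * Nat.card T.range := hmul.symm
      _ ≤ q * Nat.card T.range := Nat.mul_le_mul_right _ hkern
    have := Nat.le_of_mul_le_mul_left h1 hq0
    omega
  have hkerq : Nat.card T.ker = q := by
    rw [hrngq] at hmul
    exact Nat.eq_of_mul_eq_mul_right hq0 hmul
  -- c is in the range
  have hreq : (T.range : Set F) = {x : F | x ^ q = x} := by
    apply Set.eq_of_subset_of_ncard_le hrsub _ (Set.toFinite _)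
    rw [← hcr, hrngq]
    exact hFq
  have hcmem : c ∈ T.range := by
    rw [← SetLike.mem_coe, hreq]; exact hc
  obtain ⟨x₀, hx₀⟩ := hcmem
  -- fiber is a coset of the kernel
  have hfib : {x : F | x ^ q + x = c} = (fun k => x₀ + k) '' (T.ker : Set F) := by
    ext x
    simp only [Set.mem_setOf_eq, Set.mem_image, SetLike.mem_coe, AddMonoidHom.mem_ker]
    constructor
    · intro hx
      refine ⟨x - x₀, ?_, by ring⟩
      rw [map_sub, hTapp x, hx, hx₀, sub_self]
    · rintro ⟨k, hk, rfl⟩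
      rw [← hTapp, map_add, hx₀, hk, add_zero]
  rw [hfib, Set.ncard_image_of_injective _ (add_right_injective x₀), ← hck, hkerq]

lemma aux_inner {F : Type*} [Field F] (q : ℕ) (h2ne : (2 : F) ≠ 0)
    (h2q : (2 : F) ^ q = 2)
    (hsub : ∀ x y : F, (x - y) ^ q = x ^ q - y ^ q)
    (t nn : F) (ht : t ^ q = t) :
    {y : F | y ^ q + y = t ∧ y ^ (q + 1) = nn}.ncard = 1 ↔ t ^ 2 = 4 * nn := by
  constructor
  · intro h
    obtain ⟨y, hy⟩ := Set.ncard_eq_one.mp h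
    have hymem : y ∈ {y : F | y ^ q + y = t ∧ y ^ (q + 1) = nn} := hy ▸ rfl
    obtain ⟨h1, h2⟩ := hymem
    have hyq : y ^ q = t - y := eq_sub_of_add_eq h1
    have hty : t - y ∈ {y : F | y ^ q + y = t ∧ y ^ (q + 1) = nn} := by
      constructor
      · show (t - y) ^ q + (t - y) = t
        rw [hsub, ht, hyq]; ring
      · show (t - y) ^ (q + 1) = nn
        rw [pow_succ, hsub, ht, hyq]
        rw [pow_succ, hyq] at h2
        rw [← h2]; ring
    rw [hy, Set.mem_singleton_iff] at hty
    have hteq : t = 2 * y := by linear_combination hty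
    have hnn : nn = y ^ 2 := by
      rw [pow_succ, hyq, hty] at h2
      rw [← h2]; ring
    rw [hteq, hnn]; ring
  · intro h
    rw [Set.ncard_eq_one]
    refine ⟨t / 2, ?_⟩
    ext y
    simp only [Set.mem_setOf_eq, Set.mem_singleton_iff]
    constructor
    · rintro ⟨h1, h2⟩
      have hyq : y ^ q = t - y := eq_sub_of_add_eq h1
      rw [pow_succ, hyq] at h2
      have hsq : (2 * y - t) ^ 2 = 0 := by linear_combination h - 4 * h2
      have h0 : 2 * y - t = 0 := pow_eq_zero_iff (n := 2) (by norm_num) |>.mp hsq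
      field_simp
      linear_combination h0
    · rintro rfl
      have hdq : (t / 2) ^ q = t / 2 := by
        rw [div_pow, ht, h2q]
      refine ⟨?_, ?_⟩
      · rw [hdq]; field_simp; ring
      · rw [pow_succ, hdq]
        field_simp
        linear_combination h

/-- Let `q` be an odd prime power, `F` a finite field with `q^2` elements and `β₁ ∈ F`
nonzero with `β₁^q = β₁`. The number of `α ∈ F` with `α^q + α ≠ 0` such that
`{y : y^q + y = α^{q+1}/(α^q+α) ∧ y^{q+1} = β₁·(α^{q+1}/(α^q+α))}` has exactly one
element equals `q`. -/
theorem stmt_8 (q : ℕ) (hq : IsPrimePow q) (hodd : Odd q) (F : Type*) [Field F] [Fintype F]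
    (hF : Fintype.card F = q ^ 2) (β₁ : F) (hβ : β₁ ≠ 0) (hβq : β₁ ^ q = β₁) :
    {α : F | α ^ q + α ≠ 0 ∧
      {y : F | y ^ q + y = α ^ (q + 1) / (α ^ q + α) ∧
        y ^ (q + 1) = β₁ * (α ^ (q + 1) / (α ^ q + α))}.ncard = 1}.ncard = q := by
  classical
  obtain ⟨p, n, hp, hn, hpq⟩ := hq
  have hp' : p.Prime := hp.nat_prime
  haveI : Fact p.Prime := ⟨hp'⟩
  -- characteristic of F is p
  have h0 : ((q ^ 2 : ℕ) : F) = 0 := by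
    rw [← hF]; exact FiniteField.cast_card_eq_zero F
  haveI : CharP F (ringChar F) := ringChar.charP F
  have hrp : ringChar F = p := by
    have hrprime : (ringChar F).Prime := CharP.char_is_prime F (ringChar F)
    have hdvd : ringChar F ∣ q ^ 2 := ringChar.dvd h0
    have : ringChar F ∣ p := by
      have : ringChar F ∣ p ^ (n * 2) := by
        rw [pow_mul, hpq]; exact hdvd
      exact hrprime.dvd_of_dvd_pow this
    exact (Nat.prime_dvd_prime_iff_eq hrprime hp').mp this
  haveI hCp : CharP F p := hrp ▸ ringChar.charP F
  -- p is odd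
  have hpodd : p ≠ 2 := by
    rintro rfl
    rw [← hpq] at hodd
    exact (Nat.not_odd_iff_even.mpr (Nat.even_pow.mpr ⟨even_two, hn.ne'⟩)) hodd
  have h2ne : (2 : F) ≠ 0 := by
    have hiff := CharP.cast_eq_zero_iff F p 2
    intro h
    have h2 : ((2 : ℕ) : F) = 0 := by exact_mod_cast h
    exact hpodd ((Nat.prime_dvd_prime_iff_eq hp' Nat.prime_two).mp (hiff.mp h2))
  have hadd : ∀ x y : F, (x + y) ^ q = x ^ q + y ^ q := by
    intro x y; rw [← hpq]; exact add_pow_char_pow x y p n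
  have hsubq : ∀ x y : F, (x - y) ^ q = x ^ q - y ^ q := by
    intro x y; rw [← hpq]; exact sub_pow_char_pow x y n
  have h2q : (2 : F) ^ q = 2 := by
    have := hadd 1 1
    norm_num at this
    exact this
  have h4q : (4 : F) ^ q = 4 := by
    have h4 : (4 : F) = 2 * 2 := by norm_num
    rw [h4, mul_pow, h2q]
  have hq2 : 2 ≤ q := by
    rw [← hpq]
    calc 2 ≤ p := hp'.two_le
    _ ≤ p ^ n := Nat.le_self_pow hn.ne' p
  have h4ne : (4 : F) ≠ 0 := by
    intro h
    have : (2 : F) * 2 = 0 := by rw [← h]; norm_num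
    rcases mul_eq_zero.mp this with h' | h' <;> exact h2ne h'
  have h4β : (4 : F) * β₁ ≠ 0 := mul_ne_zero h4ne hβ
  have hqq : ∀ x : F, (x ^ q) ^ q = x := by
    intro x
    rw [← pow_mul, ← sq, ← hF, FiniteField.pow_card]
  -- Step 1: rewrite the defining condition
  have hkey : ∀ α : F, α ^ q + α ≠ 0 →
      ({y : F | y ^ q + y = α ^ (q + 1) / (α ^ q + α) ∧
        y ^ (q + 1) = β₁ * (α ^ (q + 1) / (α ^ q + α))}.ncard = 1 ↔
        α ^ (q + 1) = 4 * β₁ * (α ^ q + α)) := by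
    intro α hα
    have hαne : α ≠ 0 := by
      rintro rfl
      apply hα
      simp [zero_pow (by omega : q ≠ 0)]
    set t : F := α ^ (q + 1) / (α ^ q + α) with hts
    have htq : t ^ q = t := by
      rw [hts, div_pow]
      congr 1
      · rw [pow_succ, mul_pow, hqq]
        ring
      · rw [hadd, hqq]
        ring
    have htne : t ≠ 0 := div_ne_zero (pow_ne_zero _ hαne) hα
    rw [aux_inner q h2ne h2q hsubq t (β₁ * t) htq]
    constructor
    · intro h
      have ht4 : t = 4 * β₁ := by
        have h' : t * t = (4 * β₁) * t := by linear_combination h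
        exact mul_right_cancel₀ htne h'
      rw [hts] at ht4
      exact (div_eq_iff hα).mp ht4
    · intro h
      have ht4 : t = 4 * β₁ := by
        rw [hts, div_eq_iff hα, h]
      rw [ht4]; ring
  -- Step 2: the solution set is the image under inversion of a trace fiber
  set c : F := (4 * β₁)⁻¹ with hcs
  have hcne : c ≠ 0 := inv_ne_zero h4β
  have himg : {α : F | α ^ q + α ≠ 0 ∧
      {y : F | y ^ q + y = α ^ (q + 1) / (α ^ q + α) ∧
        y ^ (q + 1) = β₁ * (α ^ (q + 1) / (α ^ q + α))}.ncard = 1} =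
      Inv.inv '' {z : F | z ^ q + z = c} := by
    ext α
    simp only [Set.mem_setOf_eq, Set.mem_image]
    constructor
    · rintro ⟨h1, h2⟩
      have h2' := (hkey α h1).mp h2
      have hαne : α ≠ 0 := by
        rintro rfl
        apply h1
        simp [zero_pow (by omega : q ≠ 0)]
      refine ⟨α⁻¹, ?_, inv_inv α⟩
      show (α⁻¹) ^ q + α⁻¹ = c
      rw [inv_pow, hcs]
      rw [pow_succ] at h2'
      have hαq : α ^ q ≠ 0 := pow_ne_zero _ hαne
      have hstep : (α ^ q)⁻¹ + α⁻¹ = (α ^ q + α) / (α ^ q * α) := by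
        field_simp
        ring
      rw [hstep, h2', mul_comm (4 * β₁) (α ^ q + α), ← div_div, div_self h1, one_div]
    · rintro ⟨z, hz, rfl⟩
      have hz' : z ^ q + z = c := hz
      have hzne : z ≠ 0 := by
        rintro rfl
        apply hcne
        rw [← hz']
        simp [zero_pow (by omega : q ≠ 0)]
      have hzq : z ^ q ≠ 0 := pow_ne_zero _ hzne
      have htr : (z⁻¹) ^ q + z⁻¹ = c / (z ^ q * z) := by
        rw [inv_pow]
        field_simp
        linear_combination hz'
      have htrne : (z⁻¹) ^ q + z⁻¹ ≠ 0 := by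
        rw [htr]
        exact div_ne_zero hcne (mul_ne_zero hzq hzne)
      refine ⟨htrne, ?_⟩
      rw [hkey _ htrne, htr, pow_succ, inv_pow]
      rw [hcs]
      field_simp
  rw [himg, Set.ncard_image_of_injective _ inv_injective]
  -- Step 3: count the trace fiber
  have hcq : c ^ q = c := by
    rw [hcs, inv_pow, mul_pow, h4q, hβq]
  exact aux_fiber_count q hq2 hF hadd c hcq
end

section
/- Let q be an odd prime power, let F be a finite field with exactly q^2 elements, and let β₁ ∈ F with β₁ ≠ 0 and β₁^q = β₁. Then the number of elements α ∈ F with α^q + α ≠ 0 such that the set {y ∈ F : y^q + y = α^{q+1}/(α^q + α) and y^{q+1} = β₁·(α^{q+1}/(α^q + α))} has exactly two elements is equal to q(q−1)/2. -/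
set_option linter.unusedSectionVars false
set_option maxHeartbeats 1000000
open Finset Polynomial

section StmtAux
variable {F : Type*} [Field F] [Fintype F] [DecidableEq F] {q : ℕ}

lemma aux_char (hq : IsPrimePow q) (hodd : Odd q) (hF : Fintype.card F = q ^ 2) :
    (∀ x y : F, (x + y) ^ q = x ^ q + y ^ q) ∧ (2 : F) ≠ 0 ∧ ringChar F ≠ 2 := by
  obtain ⟨p, n, hp, hn, rfl⟩ := hq
  have hp' : Nat.Prime p := Nat.prime_iff.2 hp
  haveI : Fact (Nat.Prime p) := ⟨hp'⟩
  obtain ⟨m, hrp, hcard⟩ := FiniteField.card F (ringChar F)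
  have hrpeq : ringChar F = p := by
    have hd : ringChar F ∣ (p ^ n) ^ 2 := by
      rw [← hF, hcard]; exact dvd_pow_self _ m.pos.ne'
    rw [← pow_mul] at hd
    exact (Nat.prime_dvd_prime_iff_eq hrp hp').1 (hrp.dvd_of_dvd_pow hd)
  haveI hC : CharP F p := hrpeq ▸ ringChar.charP F
  have hpodd : p ≠ 2 := by
    rintro rfl
    have : ¬ Odd (2 ^ n) := by simp [Nat.even_pow, hn.ne']
    exact this hodd
  refine ⟨fun x y => add_pow_char_pow x y p n, ?_, hrpeq ▸ hpodd⟩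
  intro h2
  have h2' : ((2 : ℕ) : F) = 0 := by exact_mod_cast h2
  have := (CharP.cast_eq_zero_iff F p 2).1 h2'
  exact hpodd ((Nat.prime_dvd_prime_iff_eq hp' Nat.prime_two).1 this)

lemma aux_pow_qq (hF : Fintype.card F = q ^ 2) (x : F) : (x ^ q) ^ q = x := by
  rw [← pow_mul, ← sq, ← hF, FiniteField.pow_card]

lemma aux_root_card_le (f : F[X]) (hf : f ≠ 0) :
    (univ.filter fun x : F => f.eval x = 0).card ≤ f.natDegree := by
  have hsub : (univ.filter fun x : F => f.eval x = 0) ⊆ f.roots.toFinset := by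
    intro x hx
    simp only [mem_filter] at hx
    simp [Multiset.mem_toFinset, mem_roots, hf, IsRoot, hx.2]
  calc (univ.filter fun x : F => f.eval x = 0).card ≤ f.roots.toFinset.card :=
        Finset.card_le_card hsub
    _ ≤ Multiset.card f.roots := Multiset.toFinset_card_le _
    _ ≤ f.natDegree := f.card_roots'

lemma aux_poly_fiber_le (f : F[X]) (hdeg : f.natDegree = q) (hq0 : 0 < q) (P : F → Prop)
    [DecidablePred P] (hP : ∀ x, P x ↔ f.eval x = 0) :
    (univ.filter P).card ≤ q := by
  have hne : f ≠ 0 := fun h0 => by simp [h0] at hdeg; omega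
  have h := aux_root_card_le f hne
  rw [hdeg] at h
  refine le_trans (le_of_eq ?_) h
  apply Finset.card_nbij (fun x => x) <;> simp_all [Set.MapsTo, Set.InjOn, Set.SurjOn, Set.subset_def]

lemma aux_tr_fiber_le (hq1 : 1 < q) (t : F) :
    (univ.filter fun x : F => x ^ q + x = t).card ≤ q := by
  refine aux_poly_fiber_le (X ^ q + X - C t) ?_ (by omega) _ (fun x => by simp [sub_eq_zero])
  compute_degree!
  · simp [show ¬ 1 = q by omega, show ¬ q = 0 by omega]
  · omega

lemma aux_Kset_card_le (hq1 : 1 < q) :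
    (univ.filter fun x : F => x ^ q = x).card ≤ q := by
  refine aux_poly_fiber_le (X ^ q - X) ?_ (by omega) _ (fun x => by simp [sub_eq_zero])
  compute_degree!
  · simp [show ¬ 1 = q by omega]
  · omega

lemma aux_norm_fiber_le (hq1 : 1 < q) (d : F) :
    (univ.filter fun x : F => x ^ (q + 1) = d).card ≤ q + 1 := by
  refine aux_poly_fiber_le (X ^ (q + 1) - C d) ?_ (by omega) _ (fun x => by simp [sub_eq_zero])
  compute_degree!

lemma aux_equal_fibers {ι : Type*} (s : Finset ι) (f : ι → ℕ) (b : ℕ)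
    (hle : ∀ i ∈ s, f i ≤ b) (hsum : ∑ i ∈ s, f i = s.card * b) :
    ∀ i ∈ s, f i = b := by
  by_contra h
  push_neg at h
  obtain ⟨i, hi, hne⟩ := h
  have hlt : ∑ i ∈ s, f i < ∑ _i ∈ s, b :=
    Finset.sum_lt_sum hle ⟨i, hi, lt_of_le_of_ne (hle i hi) hne⟩
  rw [Finset.sum_const, smul_eq_mul, ← hsum] at hlt
  omega

lemma aux_K_card (hq1 : 1 < q) (hF : Fintype.card F = q ^ 2)
    (hfrob : ∀ x y : F, (x + y) ^ q = x ^ q + y ^ q) :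
    (univ.filter fun x : F => x ^ q = x).card = q ∧
      ∀ t : F, t ^ q = t → (univ.filter fun x : F => x ^ q + x = t).card = q := by
  set K := univ.filter fun x : F => x ^ q = x with hK
  have hmem : ∀ x : F, (x ^ q + x) ^ q = x ^ q + x := fun x => by
    rw [hfrob, aux_pow_qq hF, add_comm]
  have hpart : (univ : Finset F).card =
      ∑ t ∈ K, (univ.filter fun x : F => x ^ q + x = t).card :=
    Finset.card_eq_sum_card_fiberwise (fun x _ => by simp [hK, hmem x])
  rw [Finset.card_univ, hF] at hpart
  have hle1 : ∑ t ∈ K, (univ.filter fun x : F => x ^ q + x = t).card ≤ K.card * q := by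
    rw [← smul_eq_mul, ← Finset.sum_const]
    exact Finset.sum_le_sum (fun t _ => aux_tr_fiber_le hq1 t)
  have hKle : K.card ≤ q := aux_Kset_card_le hq1
  have hKq : K.card = q := by nlinarith [hpart, hle1, hKle]
  have hsum : ∑ t ∈ K, (univ.filter fun x : F => x ^ q + x = t).card = K.card * q := by
    rw [hKq, ← hpart]; ring_nf
  refine ⟨hKq, fun t ht => ?_⟩
  exact aux_equal_fibers K _ q (fun t _ => aux_tr_fiber_le hq1 t) hsum t (by simp [hK, ht])

lemma aux_norm_fiber (hq1 : 1 < q) (hF : Fintype.card F = q ^ 2)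
    (hfrob : ∀ x y : F, (x + y) ^ q = x ^ q + y ^ q) :
    ∀ d : F, d ^ q = d → d ≠ 0 → (univ.filter fun x : F => x ^ (q + 1) = d).card = q + 1 := by
  set Ks := (univ.filter fun x : F => x ^ q = x).erase 0 with hKs
  have hKcard : Ks.card = q - 1 := by
    rw [hKs, Finset.card_erase_of_mem (by simp [zero_pow (by omega : q ≠ 0)]),
      (aux_K_card hq1 hF hfrob).1]
  have hnormK : ∀ x : F, x ≠ 0 → x ^ (q + 1) ∈ Ks := by
    intro x hx
    simp only [hKs, Finset.mem_erase, Finset.mem_filter, Finset.mem_univ, true_and]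
    refine ⟨pow_ne_zero _ hx, ?_⟩
    rw [pow_succ, mul_pow, aux_pow_qq hF]
    ring
  set s := (univ : Finset F).erase 0 with hs
  have hscard : s.card = q ^ 2 - 1 := by
    rw [hs, Finset.card_erase_of_mem (by simp), Finset.card_univ, hF]
  have hfib : ∀ d ∈ Ks, (s.filter fun x : F => x ^ (q + 1) = d) =
      (univ.filter fun x : F => x ^ (q + 1) = d) := by
    intro d hd
    have hd0 : d ≠ 0 := by simp [hKs] at hd; tauto
    rw [hs, Finset.filter_erase, Finset.erase_eq_of_notMem]
    simp only [Finset.mem_filter, Finset.mem_univ, true_and]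
    intro h0
    exact hd0 (by rw [← h0, zero_pow]; omega)
  have hpart : s.card = ∑ d ∈ Ks, (s.filter fun x : F => x ^ (q + 1) = d).card :=
    Finset.card_eq_sum_card_fiberwise (fun x hx => hnormK x (by simp [hs] at hx; exact hx))
  rw [hscard] at hpart
  have hpart2 : q ^ 2 - 1 = ∑ d ∈ Ks, (univ.filter fun x : F => x ^ (q + 1) = d).card := by
    rw [hpart]; exact Finset.sum_congr rfl (fun d hd => by rw [hfib d hd])
  have hsum : ∑ d ∈ Ks, (univ.filter fun x : F => x ^ (q + 1) = d).card = Ks.card * (q + 1) := by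
    have hle : ∑ d ∈ Ks, (univ.filter fun x : F => x ^ (q + 1) = d).card ≤ Ks.card * (q + 1) := by
      rw [← smul_eq_mul, ← Finset.sum_const]
      exact Finset.sum_le_sum (fun d _ => aux_norm_fiber_le hq1 d)
    rcases Nat.exists_eq_add_of_lt hq1 with ⟨k, hk⟩
    have h1 : (q - 1) * (q + 1) = q ^ 2 - 1 := by
      subst hk
      have e1 : (1 + k + 1 - 1) * (1 + k + 1 + 1) = k ^ 2 + 4 * k + 3 := by rw [Nat.add_sub_cancel]; ring
      have e2 : (1 + k + 1) ^ 2 = k ^ 2 + 4 * k + 4 := by ring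
      omega
    rw [hKcard] at *
    omega
  intro d hdq hd0
  exact aux_equal_fibers Ks _ (q + 1) (fun d _ => aux_norm_fiber_le hq1 d) hsum d
    (by simp [hKs, hd0, hdq])

lemma aux_sqrt (hq1 : 1 < q) (hodd : Odd q) (hF : Fintype.card F = q ^ 2)
    (hchar2 : ringChar F ≠ 2) :
    ∀ d : F, d ^ q = d → ∃ s : F, s ^ 2 = d ∧ (s ^ q = s ∨ s ^ q = -s) := by
  intro d hdq
  rcases eq_or_ne d 0 with rfl | hd0
  · exact ⟨0, by simp, Or.inl (by simp [zero_pow (by omega : q ≠ 0)])⟩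
  have hdq1 : d ^ (q - 1) = 1 := by
    have h : d ^ (q - 1) * d = d := by
      rw [← pow_succ]
      rw [show q - 1 + 1 = q by omega, hdq]
    field_simp at h
    exact h
  have hpow : d ^ (Fintype.card F / 2) = 1 := by
    rw [hF]
    obtain ⟨k, rfl⟩ := hodd
    have he : (2 * k + 1) ^ 2 / 2 = (2 * k + 1 - 1) * ((2 * k + 1 + 1) / 2) := by
      have h1 : (2 * k + 1) ^ 2 = 4 * k ^ 2 + 4 * k + 1 := by ring
      have h2 : (2 * k + 1 - 1) * ((2 * k + 1 + 1) / 2) = 2 * k * (k + 1) := by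
        rw [show 2 * k + 1 - 1 = 2 * k from rfl, show (2 * k + 1 + 1) / 2 = k + 1 by omega]
      rw [h1, h2]
      have h3 : 2 * k * (k + 1) = 2 * k ^ 2 + 2 * k := by ring
      omega
    rw [he, pow_mul, hdq1, one_pow]
  have hsq : IsSquare d := (FiniteField.isSquare_iff hchar2 hd0).2 hpow
  obtain ⟨s, hs⟩ := hsq
  refine ⟨s, by rw [sq]; exact hs.symm, ?_⟩
  have h2 : (s ^ q) ^ 2 = s ^ 2 :=
    calc (s ^ q) ^ 2 = (s ^ 2) ^ q := by rw [← pow_mul, ← pow_mul, mul_comm]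
    _ = d ^ q := by rw [sq, ← hs]
    _ = d := hdq
    _ = s ^ 2 := by rw [sq]; exact hs
  have h3 : (s ^ q - s) * (s ^ q + s) = 0 := by linear_combination h2
  rcases mul_eq_zero.1 h3 with h | h
  · exact Or.inl (sub_eq_zero.1 h)
  · exact Or.inr (eq_neg_of_add_eq_zero_left h)

lemma aux_two_pow (hfrob : ∀ x y : F, (x + y) ^ q = x ^ q + y ^ q) : (2 : F) ^ q = 2 := by
  have h := hfrob 1 1
  norm_num at h
  exact h

lemma aux_frob_sub (hfrob : ∀ x y : F, (x + y) ^ q = x ^ q + y ^ q) (x z : F) :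
    (x - z) ^ q = x ^ q - z ^ q := by
  have h := hfrob (x - z) z
  rw [sub_add_cancel] at h
  linear_combination -h

lemma aux_set_char (hq1 : 1 < q) (hodd : Odd q) (hF : Fintype.card F = q ^ 2)
    (hfrob : ∀ x y : F, (x + y) ^ q = x ^ q + y ^ q) (h2 : (2 : F) ≠ 0)
    (hchar2 : ringChar F ≠ 2) (β₁ : F) (hβq : β₁ ^ q = β₁) (b : F) (hbq : b ^ q = b) :
    ({y : F | y ^ q + y = b ∧ y ^ (q + 1) = β₁ * b} : Set F).ncard = 2 ↔
      ∃ s : F, s ≠ 0 ∧ s ^ q = -s ∧ s ^ 2 = b ^ 2 - 4 * β₁ * b := by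
  have h2q : (2 : F) ^ q = 2 := aux_two_pow hfrob
  have h4 : (4 : F) ≠ 0 := by
    have : (4 : F) = 2 * 2 := by norm_num
    rw [this]; exact mul_ne_zero h2 h2
  have hsubm : ∀ y : F, (y ^ q + y = b ∧ y ^ (q + 1) = β₁ * b) ↔
      (y ^ q = b - y ∧ (2 * y - b) ^ 2 = b ^ 2 - 4 * β₁ * b) := by
    intro y
    constructor
    · rintro ⟨h1, h2'⟩
      have hy : y ^ q = b - y := by linear_combination h1
      refine ⟨hy, ?_⟩
      have hN : y ^ (q + 1) = (b - y) * y := by rw [pow_succ, hy]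
      linear_combination 4 * (h2'.symm.trans hN)
    · rintro ⟨hy, hsq⟩
      refine ⟨by linear_combination hy, ?_⟩
      have hN : y ^ (q + 1) = (b - y) * y := by rw [pow_succ, hy]
      rw [hN]
      apply mul_left_cancel₀ h4
      linear_combination -hsq
  constructor
  · -- hard direction via contrapositive
    intro hcard
    by_contra hns
    obtain ⟨s, hs2, hsor⟩ := aux_sqrt hq1 hodd hF hchar2 (b ^ 2 - 4 * β₁ * b) (by
      have h4q : (4 : F) ^ q = 4 := by
        have : (4 : F) = 2 ^ 2 := by norm_num
        rw [this, ← pow_mul, mul_comm, pow_mul, h2q]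
      rw [aux_frob_sub hfrob, mul_pow, mul_pow, h4q, hβq, hbq, ← pow_mul, mul_comm 2 q,
        pow_mul, hbq])
    rcases eq_or_ne s 0 with rfl | hs0
    · -- disc = 0 : at most one element
      have hsub : ({y : F | y ^ q + y = b ∧ y ^ (q + 1) = β₁ * b} : Set F) ⊆ {b / 2} := by
        intro y hy
        rw [Set.mem_setOf_eq, hsubm y] at hy
        have hz : (2 * y - b) ^ 2 = 0 := by rw [hy.2, ← hs2]; ring
        have h0 : 2 * y - b = 0 := pow_eq_zero_iff (by omega) |>.1 hz
        simp only [Set.mem_singleton_iff]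
        field_simp
        linear_combination h0
      have := Set.ncard_le_ncard hsub (Set.finite_singleton _)
      rw [Set.ncard_singleton] at this
      omega
    rcases hsor with hfix | hneg
    · -- disc nonzero square in K : empty
      have hempty : ({y : F | y ^ q + y = b ∧ y ^ (q + 1) = β₁ * b} : Set F) = ∅ := by
        ext y
        simp only [Set.mem_setOf_eq, Set.mem_empty_iff_false, iff_false]
        rw [hsubm y]
        rintro ⟨hy, hsq⟩
        have hpm : (2 * y - b - s) * (2 * y - b + s) = 0 := by
          linear_combination hsq - hs2
        have hyq : y ^ q = y → False := by
          intro hyy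
          rw [hyy] at hy
          have hyb : 2 * y = b := by linear_combination hy
          rw [hyb] at hpm
          rcases mul_eq_zero.1 hpm with h | h
          · exact hs0 (by linear_combination -h)
          · exact hs0 (by linear_combination h)
        apply hyq
        have h2y : (2 * y) ^ q = 2 * y := by
          rcases mul_eq_zero.1 hpm with h | h
          · have hy2 : 2 * y = b + s := by linear_combination h
            rw [hy2, hfrob, hbq, hfix]
          · have hy2 : 2 * y = b - s := by linear_combination h
            rw [hy2, aux_frob_sub hfrob, hbq, hfix]
        rw [mul_pow, h2q] at h2y
        exact mul_left_cancel₀ h2 h2y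
      rw [hempty] at hcard
      simp at hcard
    · exact hns ⟨s, hs0, hneg, hs2⟩
  · rintro ⟨s, hs0, hsq, hs2⟩
    have hy1 : 2 * ((b + s) / 2) = b + s := by field_simp
    have hy2 : 2 * ((b - s) / 2) = b - s := by field_simp
    have hset : ({y : F | y ^ q + y = b ∧ y ^ (q + 1) = β₁ * b} : Set F) =
        {(b + s) / 2, (b - s) / 2} := by
      ext y
      rw [Set.mem_setOf_eq, hsubm y]
      constructor
      · rintro ⟨hy, hsqy⟩
        have hpm : (2 * y - b - s) * (2 * y - b + s) = 0 := by
          linear_combination hsqy - hs2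
        rcases mul_eq_zero.1 hpm with h | h
        · left
          apply mul_left_cancel₀ h2
          rw [hy1]
          linear_combination h
        · right
          apply mul_left_cancel₀ h2
          rw [hy2]
          linear_combination h
      · intro hy
        rcases hy with rfl | rfl
        · refine ⟨?_, ?_⟩
          · rw [div_pow, hfrob, hbq, hsq, h2q]
            field_simp
            ring
          · rw [hy1]
            linear_combination hs2
        · refine ⟨?_, ?_⟩
          · rw [div_pow, aux_frob_sub hfrob, hbq, hsq, h2q]
            field_simp
            ring
          · rw [hy2]
            linear_combination hs2
    rw [hset]
    apply Set.ncard_pair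
    intro hcontra
    apply hs0
    have h2s : 2 * s = 0 := by
      have h := congrArg (fun z : F => 2 * z) hcontra
      rw [hy1, hy2] at h
      linear_combination h
    rcases mul_eq_zero.1 h2s with h | h
    · exact absurd h h2
    · exact h

lemma aux_alpha_fiber (hq1 : 1 < q) (hodd : Odd q) (hF : Fintype.card F = q ^ 2)
    (hfrob : ∀ x y : F, (x + y) ^ q = x ^ q + y ^ q)
    (c : F) (hcq : c ^ q = c) (hc0 : c ≠ 0) :
    (univ.filter fun α : F => α ^ q + α ≠ 0 ∧ α ^ (q + 1) / (α ^ q + α) = c).card = q := by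
  have hexp : ∀ α : F, (α - c) ^ (q + 1) = α ^ (q + 1) - c * α ^ q - c * α + c ^ 2 := by
    intro α
    rw [pow_succ, pow_succ, aux_frob_sub hfrob, hcq]
    ring
  have hiff : ∀ α : F, (α ^ q + α ≠ 0 ∧ α ^ (q + 1) / (α ^ q + α) = c) ↔
      (α ≠ 0 ∧ (α - c) ^ (q + 1) = c ^ 2) := by
    intro α
    constructor
    · rintro ⟨hTr, hdiv⟩
      have hN : α ^ (q + 1) = c * (α ^ q + α) := by
        rw [div_eq_iff hTr] at hdiv
        linear_combination hdiv
      have hα0 : α ≠ 0 := by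
        rintro rfl
        apply hTr
        rw [zero_pow (by omega : q ≠ 0), add_zero]
      exact ⟨hα0, by rw [hexp]; linear_combination hN⟩
    · rintro ⟨hα0, hNq⟩
      rw [hexp] at hNq
      have hN : α ^ (q + 1) = c * (α ^ q + α) := by linear_combination hNq
      have hTr : α ^ q + α ≠ 0 := by
        intro h0
        rw [h0, mul_zero] at hN
        exact hα0 (pow_eq_zero_iff (by omega : q + 1 ≠ 0) |>.1 hN)
      exact ⟨hTr, by rw [div_eq_iff hTr, hN]⟩
  have hc2q : (c ^ 2) ^ q = c ^ 2 := by
    rw [← pow_mul, mul_comm 2 q, pow_mul, hcq]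
  have hc20 : c ^ 2 ≠ 0 := pow_ne_zero _ hc0
  have hcardQ : (univ.filter fun α : F => (α - c) ^ (q + 1) = c ^ 2).card = q + 1 := by
    have hbij : (univ.filter fun α : F => (α - c) ^ (q + 1) = c ^ 2).card =
        (univ.filter fun β : F => β ^ (q + 1) = c ^ 2).card := by
      apply Finset.card_bij' (fun α _ => α - c) (fun β _ => β + c) <;> simp
    rw [hbij, aux_norm_fiber hq1 hF hfrob (c ^ 2) hc2q hc20]
  have h0mem : (0 : F) ∈ univ.filter fun α : F => (α - c) ^ (q + 1) = c ^ 2 := by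
    simp only [Finset.mem_filter, Finset.mem_univ, true_and, zero_sub]
    rw [Even.neg_pow (by rcases hodd with ⟨k, hk⟩; exact ⟨k + 1, by omega⟩), pow_succ, hcq, sq]
  have heq : (univ.filter fun α : F => α ^ q + α ≠ 0 ∧ α ^ (q + 1) / (α ^ q + α) = c) =
      (univ.filter fun α : F => (α - c) ^ (q + 1) = c ^ 2).erase 0 := by
    ext α
    simp only [Finset.mem_filter, Finset.mem_univ, true_and, Finset.mem_erase]
    rw [hiff α]
  rw [heq, Finset.card_erase_of_mem h0mem, hcardQ]
  omega

lemma aux_pair_count (hq1 : 1 < q) (hodd : Odd q) (hF : Fintype.card F = q ^ 2)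
    (hfrob : ∀ x y : F, (x + y) ^ q = x ^ q + y ^ q) (h2 : (2 : F) ≠ 0)
    (β₁ : F) (hβ : β₁ ≠ 0) (hβq : β₁ ^ q = β₁) :
    ((univ ×ˢ univ : Finset (F × F)).filter fun z =>
        z.1 ^ q = z.1 ∧ z.1 ≠ 0 ∧ z.2 ^ q = z.2 ∧ z.2 ≠ 0 ∧
          z.2 ^ 2 = z.1 ^ 2 - 4 * β₁ * z.1).card = q - 3 := by
  have h2q : (2 : F) ^ q = 2 := aux_two_pow hfrob
  have hq0 : q ≠ 0 := by omega
  have hneg : ∀ x : F, (-x) ^ q = -(x ^ q) := fun x => Odd.neg_pow hodd x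
  have h2β : (2 * β₁) ^ q = 2 * β₁ := by rw [mul_pow, h2q, hβq]
  have h2β0 : 2 * β₁ ≠ 0 := mul_ne_zero h2 hβ
  have h4β2 : (4 * β₁ ^ 2 : F) ≠ 0 := by
    have h : (4 * β₁ ^ 2 : F) = (2 * β₁) * (2 * β₁) := by ring
    rw [h]; exact mul_ne_zero h2β0 h2β0
  have h4β2q : (4 * β₁ ^ 2 : F) ^ q = 4 * β₁ ^ 2 := by
    have h : (4 * β₁ ^ 2 : F) = (2 * β₁) * (2 * β₁) := by ring
    rw [h, mul_pow, h2β]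
  have hne2β : (2 * β₁ : F) ≠ -(2 * β₁) := by
    intro hc
    apply h2β0
    have h22 : 2 * (2 * β₁) = 0 := by linear_combination hc
    rcases mul_eq_zero.1 h22 with h | h
    · exact absurd h h2
    · exact h
  set T : Finset F := ((((univ.filter fun x : F => x ^ q = x).erase 0).erase (2 * β₁)).erase
    (-(2 * β₁))) with hT
  have hm0 : (0 : F) ∈ univ.filter fun x : F => x ^ q = x := by simp [zero_pow hq0]
  have hm1 : (2 * β₁ : F) ∈ (univ.filter fun x : F => x ^ q = x).erase 0 := by
    simp only [Finset.mem_erase, Finset.mem_filter, Finset.mem_univ, true_and]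
    exact ⟨h2β0, h2β⟩
  have hm2 : (-(2 * β₁) : F) ∈ ((univ.filter fun x : F => x ^ q = x).erase 0).erase (2 * β₁) := by
    simp only [Finset.mem_erase, Finset.mem_filter, Finset.mem_univ, true_and]
    exact ⟨fun h => hne2β h.symm, neg_ne_zero.2 h2β0, by rw [hneg, h2β]⟩
  have hTcard : T.card = q - 3 := by
    rw [hT, Finset.card_erase_of_mem hm2, Finset.card_erase_of_mem hm1,
      Finset.card_erase_of_mem hm0, (aux_K_card hq1 hF hfrob).1]
    omega
  have hTmem : ∀ t : F, t ∈ T ↔ t ^ q = t ∧ t ≠ 0 ∧ t ≠ 2 * β₁ ∧ t ≠ -(2 * β₁) := by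
    intro t
    rw [hT]
    simp only [Finset.mem_erase, Finset.mem_filter, Finset.mem_univ, true_and]
    tauto
  rw [← hTcard]
  symm
  apply Finset.card_bij'
    (i := fun t (ht : t ∈ T) =>
      ((2 * β₁ + (t + 4 * β₁ ^ 2 / t) / 2, (t - 4 * β₁ ^ 2 / t) / 2) : F × F))
    (j := fun z (hz : z ∈ _) => z.1 - 2 * β₁ + z.2)
  · -- hi
    intro t ht
    rw [hTmem] at ht
    obtain ⟨htq, ht0, ht2, ht2'⟩ := ht
    have heq : (4 * β₁ ^ 2 / t) ^ q = 4 * β₁ ^ 2 / t := by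
      rw [div_pow, h4β2q, htq]
    simp only [Finset.mem_filter, Finset.mem_product, Finset.mem_univ, true_and, and_true]
    refine ⟨?_, ?_, ?_, ?_, ?_⟩
    · rw [hfrob, div_pow, hfrob, heq, htq, h2q, h2β]
    · intro hc
      apply ht2'
      have h0 : 2 * t * (2 * β₁ + (t + 4 * β₁ ^ 2 / t) / 2) = 0 := by rw [hc, mul_zero]
      have hexp : 2 * t * (2 * β₁ + (t + 4 * β₁ ^ 2 / t) / 2) = (t + 2 * β₁) ^ 2 := by
        field_simp
        ring
      rw [hexp] at h0
      have hz := pow_eq_zero_iff (n := 2) (by norm_num) |>.1 h0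
      linear_combination hz
    · rw [div_pow, aux_frob_sub hfrob, heq, htq, h2q]
    · intro hw
      have h0 : 2 * t * ((t - 4 * β₁ ^ 2 / t) / 2) = 0 := by rw [hw, mul_zero]
      have hexp : 2 * t * ((t - 4 * β₁ ^ 2 / t) / 2) = (t - 2 * β₁) * (t + 2 * β₁) := by
        field_simp
        ring
      rw [hexp] at h0
      rcases mul_eq_zero.1 h0 with h | h
      · exact ht2 (by linear_combination h)
      · exact ht2' (by linear_combination h)
    · field_simp
      ring
  · -- left inverse
    intro t ht
    rw [hTmem] at ht
    obtain ⟨htq, ht0, -, -⟩ := ht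
    show 2 * β₁ + (t + 4 * β₁ ^ 2 / t) / 2 - 2 * β₁ + (t - 4 * β₁ ^ 2 / t) / 2 = t
    field_simp
    ring
  · -- right inverse
    intro z hz
    obtain ⟨c, w⟩ := z
    simp only [Finset.mem_filter, Finset.mem_product, Finset.mem_univ, true_and] at hz
    obtain ⟨hcq, hc0, hwq, hw0, hwc⟩ := hz
    have hprod : (c - 2 * β₁ + w) * (c - 2 * β₁ - w) = 4 * β₁ ^ 2 := by
      linear_combination -hwc
    have ht0 : c - 2 * β₁ + w ≠ 0 := by
      intro h
      rw [h, zero_mul] at hprod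
      exact h4β2 hprod.symm
    have hdiv : 4 * β₁ ^ 2 / (c - 2 * β₁ + w) = c - 2 * β₁ - w := by
      rw [eq_comm, eq_div_iff ht0]
      linear_combination hprod
    show (2 * β₁ + ((c - 2 * β₁ + w) + 4 * β₁ ^ 2 / (c - 2 * β₁ + w)) / 2,
        ((c - 2 * β₁ + w) - 4 * β₁ ^ 2 / (c - 2 * β₁ + w)) / 2) = (c, w)
    rw [hdiv]
    simp only [Prod.mk.injEq]
    constructor
    · field_simp
      ring
    · field_simp
      ring
  · -- hj
    intro z hz
    obtain ⟨c, w⟩ := z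
    simp only [Finset.mem_filter, Finset.mem_product, Finset.mem_univ, true_and] at hz
    obtain ⟨hcq, hc0, hwq, hw0, hwc⟩ := hz
    rw [hTmem]
    have hprod : (c - 2 * β₁ + w) * (c - 2 * β₁ - w) = 4 * β₁ ^ 2 := by
      linear_combination -hwc
    have ht0 : c - 2 * β₁ + w ≠ 0 := by
      intro h
      rw [h, zero_mul] at hprod
      exact h4β2 hprod.symm
    refine ⟨?_, ht0, ?_, ?_⟩
    · show (c - 2 * β₁ + w) ^ q = c - 2 * β₁ + w
      rw [hfrob, aux_frob_sub hfrob, hcq, hwq, h2β]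
    · intro ht
      apply hw0
      have ht' : c - 2 * β₁ + w = 2 * β₁ := ht
      have hn : (2 * β₁) * (c - 2 * β₁ - w) = (2 * β₁) * (2 * β₁) := by
        linear_combination hprod - (c - 2 * β₁ - w) * ht'
      have h1 : c - 2 * β₁ - w = 2 * β₁ := mul_left_cancel₀ h2β0 hn
      have h2w : 2 * w = 0 := by linear_combination ht' - h1
      rcases mul_eq_zero.1 h2w with h | h
      · exact absurd h h2
      · exact h
    · intro ht
      apply hc0
      have ht' : c - 2 * β₁ + w = -(2 * β₁) := ht
      have hn : (-(2 * β₁)) * (c - 2 * β₁ - w) = (-(2 * β₁)) * (-(2 * β₁)) := by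
        linear_combination hprod - (c - 2 * β₁ - w) * ht'
      have h1 : c - 2 * β₁ - w = -(2 * β₁) := mul_left_cancel₀ (neg_ne_zero.2 h2β0) hn
      have h2c : 2 * c = 0 := by linear_combination ht' + h1
      rcases mul_eq_zero.1 h2c with h | h
      · exact absurd h h2
      · exact h

lemma aux_c_count (hq1 : 1 < q) (hodd : Odd q) (hF : Fintype.card F = q ^ 2)
    (hfrob : ∀ x y : F, (x + y) ^ q = x ^ q + y ^ q) (h2 : (2 : F) ≠ 0)
    (hchar2 : ringChar F ≠ 2) (β₁ : F) (hβ : β₁ ≠ 0) (hβq : β₁ ^ q = β₁) :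
    (univ.filter fun c : F => c ^ q = c ∧ c ≠ 0 ∧
        ∃ s : F, s ≠ 0 ∧ s ^ q = -s ∧ s ^ 2 = c ^ 2 - 4 * β₁ * c).card = (q - 1) / 2 := by
  have h2q : (2 : F) ^ q = 2 := aux_two_pow hfrob
  have hq0 : q ≠ 0 := by omega
  have hq3 : 3 ≤ q := by
    rcases hodd with ⟨k, hk⟩
    omega
  have hneg : ∀ x : F, (-x) ^ q = -(x ^ q) := fun x => Odd.neg_pow hodd x
  have h4 : (4 : F) ≠ 0 := by
    have h : (4 : F) = 2 * 2 := by norm_num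
    rw [h]; exact mul_ne_zero h2 h2
  have h4q : (4 : F) ^ q = 4 := by
    have h : (4 : F) = 2 ^ 2 := by norm_num
    rw [h, ← pow_mul, mul_comm, pow_mul, h2q]
  have h4β0 : (4 * β₁ : F) ≠ 0 := mul_ne_zero h4 hβ
  have h4βq : (4 * β₁ : F) ^ q = 4 * β₁ := by rw [mul_pow, h4q, hβq]
  have hdq : ∀ c : F, c ^ q = c → (c ^ 2 - 4 * β₁ * c) ^ q = c ^ 2 - 4 * β₁ * c := by
    intro c hc
    have hs := hfrob (c ^ 2 - 4 * β₁ * c) (4 * β₁ * c)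
    rw [sub_add_cancel] at hs
    have hc2 : (c ^ 2) ^ q = c ^ 2 := by rw [← pow_mul, mul_comm, pow_mul, hc]
    have h4βc : (4 * β₁ * c) ^ q = 4 * β₁ * c := by rw [mul_pow, h4βq, hc]
    rw [hc2, h4βc] at hs
    linear_combination -hs
  -- the two classes
  set NS : F → Prop := fun c => ∃ s : F, s ≠ 0 ∧ s ^ q = -s ∧ s ^ 2 = c ^ 2 - 4 * β₁ * c with hNS
  set SQ : F → Prop := fun c => ∃ w : F, w ≠ 0 ∧ w ^ q = w ∧ w ^ 2 = c ^ 2 - 4 * β₁ * c with hSQ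
  set Kstar : Finset F := univ.filter fun c : F => c ^ q = c ∧ c ≠ 0 with hKstar
  have hKstarcard : Kstar.card = q - 1 := by
    have he : Kstar = (univ.filter fun x : F => x ^ q = x).erase 0 := by
      ext c
      simp only [hKstar, Finset.mem_filter, Finset.mem_univ, true_and, Finset.mem_erase]
      tauto
    rw [he, Finset.card_erase_of_mem (by simp [zero_pow hq0]), (aux_K_card hq1 hF hfrob).1]
  -- the complement of SQ ∨ NS in Kstar is {4β₁}
  have hcompl : Kstar.filter (fun c => ¬(SQ c ∨ NS c)) = {4 * β₁} := by
    ext c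
    simp only [Finset.mem_filter, Finset.mem_singleton, hKstar, Finset.mem_univ, true_and]
    constructor
    · rintro ⟨⟨hcq, hc0⟩, hn⟩
      by_contra hc4
      have hd0 : c ^ 2 - 4 * β₁ * c ≠ 0 := by
        intro h0
        apply hc4
        have hfac : c * (c - 4 * β₁) = 0 := by linear_combination h0
        rcases mul_eq_zero.1 hfac with h | h
        · exact absurd h hc0
        · linear_combination h
      obtain ⟨s, hs2, hsor⟩ := aux_sqrt hq1 hodd hF hchar2 _ (hdq c hcq)
      have hs0 : s ≠ 0 := by
        intro h0
        rw [h0] at hs2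
        apply hd0
        rw [← hs2]
        ring
      rcases hsor with h | h
      · exact hn (Or.inl ⟨s, hs0, h, hs2⟩)
      · exact hn (Or.inr ⟨s, hs0, h, hs2⟩)
    · rintro rfl
      refine ⟨⟨h4βq, h4β0⟩, ?_⟩
      rintro (⟨w, hw0, -, hw2⟩ | ⟨w, hw0, -, hw2⟩) <;>
      · apply hw0
        have : w ^ 2 = 0 := by rw [hw2]; ring
        exact pow_eq_zero_iff (n := 2) (by norm_num) |>.1 this
  -- SQ and NS are mutually exclusive on Kstar
  have hdisj : Disjoint (Kstar.filter SQ) (Kstar.filter NS) := by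
    rw [Finset.disjoint_left]
    rintro c hc1 hc2
    simp only [Finset.mem_filter] at hc1 hc2
    obtain ⟨-, w, hw0, hwq, hw2⟩ := hc1
    obtain ⟨-, s, hs0, hsq, hs2⟩ := hc2
    have hpm : (w - s) * (w + s) = 0 := by linear_combination hw2 - hs2
    have hss : s = -s := by
      rcases mul_eq_zero.1 hpm with h | h
      · have hws : w = s := by linear_combination h
        rw [hws] at hwq
        rw [hsq] at hwq
        linear_combination -hwq
      · have hws : w = -s := by linear_combination h
        rw [hws, hneg, hsq] at hwq
        linear_combination hwq
    apply hs0
    have h2s : 2 * s = 0 := by linear_combination hss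
    rcases mul_eq_zero.1 h2s with h | h
    · exact absurd h h2
    · exact h
  -- counting SQ via pairs
  have hBcount : 2 * (Kstar.filter SQ).card = q - 3 := by
    rw [← aux_pair_count hq1 hodd hF hfrob h2 β₁ hβ hβq]
    have hfiber : ((univ ×ˢ univ : Finset (F × F)).filter fun z =>
        z.1 ^ q = z.1 ∧ z.1 ≠ 0 ∧ z.2 ^ q = z.2 ∧ z.2 ≠ 0 ∧
          z.2 ^ 2 = z.1 ^ 2 - 4 * β₁ * z.1).card =
        ∑ c ∈ univ, (((univ ×ˢ univ : Finset (F × F)).filter fun z =>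
          z.1 ^ q = z.1 ∧ z.1 ≠ 0 ∧ z.2 ^ q = z.2 ∧ z.2 ≠ 0 ∧
            z.2 ^ 2 = z.1 ^ 2 - 4 * β₁ * z.1).filter fun z => z.1 = c).card :=
      Finset.card_eq_sum_card_fiberwise (fun z _ => Finset.mem_univ _)
    have hinner : ∀ c : F, (((univ ×ˢ univ : Finset (F × F)).filter fun z =>
          z.1 ^ q = z.1 ∧ z.1 ≠ 0 ∧ z.2 ^ q = z.2 ∧ z.2 ≠ 0 ∧
            z.2 ^ 2 = z.1 ^ 2 - 4 * β₁ * z.1).filter fun z => z.1 = c).card =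
        (univ.filter fun w : F => c ^ q = c ∧ c ≠ 0 ∧ w ^ q = w ∧ w ≠ 0 ∧
            w ^ 2 = c ^ 2 - 4 * β₁ * c).card := by
      intro c
      apply Finset.card_bij' (i := fun z _ => z.2) (j := fun w _ => ((c, w) : F × F))
      case hi =>
        rintro ⟨c', w⟩ hz
        simp only [Finset.mem_filter, Finset.mem_product, Finset.mem_univ, true_and] at hz ⊢
        obtain ⟨⟨h1, h2', h3, h4', h5⟩, h6⟩ := hz
        subst h6
        exact ⟨h1, h2', h3, h4', h5⟩
      case left_inv =>
        rintro ⟨c', w⟩ hz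
        simp only [Finset.mem_filter, Finset.mem_product, Finset.mem_univ, true_and] at hz
        obtain ⟨-, h6⟩ := hz
        simp [h6]
      case right_inv =>
        intro w hw
        rfl
      case hj =>
        intro w hw
        simp only [Finset.mem_filter, Finset.mem_univ, true_and, Finset.mem_product,
          and_true] at hw ⊢
        tauto
    have hval : ∀ c : F, (univ.filter fun w : F => c ^ q = c ∧ c ≠ 0 ∧ w ^ q = w ∧ w ≠ 0 ∧
            w ^ 2 = c ^ 2 - 4 * β₁ * c).card =
        if c ∈ Kstar.filter SQ then 2 else 0 := by
      intro c
      by_cases hc : c ∈ Kstar.filter SQ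
      · rw [if_pos hc]
        simp only [Finset.mem_filter, hKstar, Finset.mem_univ, true_and] at hc
        obtain ⟨⟨hcq, hc0⟩, w₀, hw0, hwq, hw2⟩ := hc
        have hwne : w₀ ≠ -w₀ := by
          intro hcon
          apply hw0
          have h2w : 2 * w₀ = 0 := by linear_combination hcon
          rcases mul_eq_zero.1 h2w with h | h
          · exact absurd h h2
          · exact h
        have hset : (univ.filter fun w : F => c ^ q = c ∧ c ≠ 0 ∧ w ^ q = w ∧ w ≠ 0 ∧
            w ^ 2 = c ^ 2 - 4 * β₁ * c) = {w₀, -w₀} := by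
          ext w
          simp only [Finset.mem_filter, Finset.mem_univ, true_and, Finset.mem_insert,
            Finset.mem_singleton]
          constructor
          · rintro ⟨-, -, hwq', hw0', hw2'⟩
            have hpm : (w - w₀) * (w + w₀) = 0 := by linear_combination hw2' - hw2
            rcases mul_eq_zero.1 hpm with h | h
            · left; linear_combination h
            · right; linear_combination h
          · rintro (rfl | rfl)
            · exact ⟨hcq, hc0, hwq, hw0, hw2⟩
            · exact ⟨hcq, hc0, by rw [hneg, hwq], neg_ne_zero.2 hw0, by rw [neg_sq]; exact hw2⟩
        rw [hset, Finset.card_pair hwne]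
      · rw [if_neg hc]
        rw [Finset.card_eq_zero, Finset.filter_eq_empty_iff]
        rintro w - ⟨hcq, hc0, hwq, hw0, hw2⟩
        exact hc (by
          simp only [Finset.mem_filter, hKstar, Finset.mem_univ, true_and]
          exact ⟨⟨hcq, hc0⟩, w, hw0, hwq, hw2⟩)
    rw [hfiber]
    rw [Finset.sum_congr rfl (fun c _ => (hinner c).trans (hval c))]
    rw [Finset.sum_ite_mem]
    simp [Finset.sum_const, mul_comm]
  -- assemble
  have hsplit : (Kstar.filter (fun c => SQ c ∨ NS c)).card +
      (Kstar.filter (fun c => ¬(SQ c ∨ NS c))).card = Kstar.card :=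
    Finset.card_filter_add_card_filter_not _
  rw [hcompl, Finset.card_singleton, hKstarcard] at hsplit
  have hor : (Kstar.filter (fun c => SQ c ∨ NS c)).card =
      (Kstar.filter SQ).card + (Kstar.filter NS).card := by
    rw [Finset.filter_or]
    exact Finset.card_union_of_disjoint hdisj
  have htarget : (univ.filter fun c : F => c ^ q = c ∧ c ≠ 0 ∧
      ∃ s : F, s ≠ 0 ∧ s ^ q = -s ∧ s ^ 2 = c ^ 2 - 4 * β₁ * c) = Kstar.filter NS := by
    ext c
    simp only [Finset.mem_filter, hKstar, Finset.mem_univ, true_and, hNS]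
    tauto
  rw [htarget]
  omega

end StmtAux

/-- Let `q` be an odd prime power, `F` a finite field with `q^2` elements and `β₁ ∈ F`
nonzero with `β₁^q = β₁`. The number of `α ∈ F` with `α^q + α ≠ 0` such that
`{y : y^q + y = α^{q+1}/(α^q+α) ∧ y^{q+1} = β₁·(α^{q+1}/(α^q+α))}` has exactly two
elements equals `q(q-1)/2`. -/
theorem stmt_9 (q : ℕ) (hq : IsPrimePow q) (hodd : Odd q) (F : Type*) [Field F] [Fintype F]
    (hF : Fintype.card F = q ^ 2) (β₁ : F) (hβ : β₁ ≠ 0) (hβq : β₁ ^ q = β₁) :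
    {α : F | α ^ q + α ≠ 0 ∧
      {y : F | y ^ q + y = α ^ (q + 1) / (α ^ q + α) ∧
        y ^ (q + 1) = β₁ * (α ^ (q + 1) / (α ^ q + α))}.ncard = 2}.ncard
      = q * (q - 1) / 2 := by
  letI : DecidableEq F := Classical.decEq F
  have hq1 : 1 < q := hq.two_le
  obtain ⟨hfrob, h2, hchar2⟩ := aux_char hq hodd hF
  have hα0 : ∀ α : F, α ^ q + α ≠ 0 → α ≠ 0 := by
    rintro α hα rfl
    exact hα (by rw [zero_pow (by omega : q ≠ 0), add_zero])
  have hbq : ∀ α : F, α ^ q + α ≠ 0 → (α ^ (q + 1) / (α ^ q + α)) ^ q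
      = α ^ (q + 1) / (α ^ q + α) := by
    intro α hα
    rw [div_pow]
    have h1 : (α ^ (q + 1)) ^ q = α ^ (q + 1) := by
      rw [pow_succ, mul_pow, aux_pow_qq hF]
      ring
    have h7 : (α ^ q + α) ^ q = α ^ q + α := by
      rw [hfrob, aux_pow_qq hF, add_comm]
    rw [h1, h7]
  have hb0 : ∀ α : F, α ^ q + α ≠ 0 → α ^ (q + 1) / (α ^ q + α) ≠ 0 := fun α hα =>
    div_ne_zero (pow_ne_zero _ (hα0 α hα)) hα
  have hset : {α : F | α ^ q + α ≠ 0 ∧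
      {y : F | y ^ q + y = α ^ (q + 1) / (α ^ q + α) ∧
        y ^ (q + 1) = β₁ * (α ^ (q + 1) / (α ^ q + α))}.ncard = 2} =
      ↑(univ.filter fun α : F => α ^ q + α ≠ 0 ∧
        ∃ s : F, s ≠ 0 ∧ s ^ q = -s ∧ s ^ 2 = (α ^ (q + 1) / (α ^ q + α)) ^ 2
          - 4 * β₁ * (α ^ (q + 1) / (α ^ q + α))) := by
    ext α
    simp only [Set.mem_setOf_eq, Finset.coe_filter, Finset.mem_univ, true_and]
    exact and_congr_right fun hα =>
      aux_set_char hq1 hodd hF hfrob h2 hchar2 β₁ hβq _ (hbq α hα)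
  rw [hset, Set.ncard_coe_finset]
  set Cns : Finset F := univ.filter fun c : F => c ^ q = c ∧ c ≠ 0 ∧
    ∃ s : F, s ≠ 0 ∧ s ^ q = -s ∧ s ^ 2 = c ^ 2 - 4 * β₁ * c with hCns
  set M : Finset F := univ.filter (fun α : F => α ^ q + α ≠ 0 ∧
      ∃ s : F, s ≠ 0 ∧ s ^ q = -s ∧ s ^ 2 = (α ^ (q + 1) / (α ^ q + α)) ^ 2
        - 4 * β₁ * (α ^ (q + 1) / (α ^ q + α))) with hM
  have hmap : ∀ α ∈ M, α ^ (q + 1) / (α ^ q + α) ∈ Cns := by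
    intro α hα
    simp only [hM, Finset.mem_filter, Finset.mem_univ, true_and] at hα
    obtain ⟨hTr, hNSb⟩ := hα
    simp only [hCns, Finset.mem_filter, Finset.mem_univ, true_and]
    exact ⟨hbq α hTr, hb0 α hTr, hNSb⟩
  have hcardM : M.card = ∑ c ∈ Cns, (M.filter fun α => α ^ (q + 1) / (α ^ q + α) = c).card :=
    Finset.card_eq_sum_card_fiberwise hmap
  have hfib : ∀ c ∈ Cns, (M.filter fun α => α ^ (q + 1) / (α ^ q + α) = c).card = q := by
    intro c hc
    simp only [hCns, Finset.mem_filter, Finset.mem_univ, true_and] at hc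
    obtain ⟨hcq, hc0, hNSc⟩ := hc
    have he : M.filter (fun α => α ^ (q + 1) / (α ^ q + α) = c) =
        univ.filter (fun α : F => α ^ q + α ≠ 0 ∧ α ^ (q + 1) / (α ^ q + α) = c) := by
      ext α
      simp only [hM, Finset.filter_filter, Finset.mem_filter, Finset.mem_univ, true_and]
      constructor
      · rintro ⟨⟨hTr, -⟩, heq⟩
        exact ⟨hTr, heq⟩
      · rintro ⟨hTr, heq⟩
        refine ⟨⟨hTr, ?_⟩, heq⟩
        rw [heq]
        exact hNSc
    rw [he]
    exact aux_alpha_fiber hq1 hodd hF hfrob c hcq hc0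
  have hCnscard : Cns.card = (q - 1) / 2 := by
    rw [hCns]
    exact aux_c_count hq1 hodd hF hfrob h2 hchar2 β₁ hβ hβq
  rw [hcardM, Finset.sum_congr rfl hfib, Finset.sum_const, smul_eq_mul, hCnscard]
  have hdvd : 2 ∣ q - 1 := by
    rcases hodd with ⟨k, hk⟩
    omega
  rw [Nat.mul_div_assoc q hdvd, mul_comm]
end

section
/- Let q be an odd prime power, let F be a finite field with exactly q^2 elements, and let β₁ ∈ F with β₁ ≠ 0 and β₁^q = β₁. Then the set of pairs {(α, y) ∈ F × F : α^q + α ≠ 0, y^q + y = α^{q+1}/(α^q + α), and y^{q+1} = β₁·(y^q + y)} has exactly q^2 elements. -/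
open Finset Polynomial
open Finset Polynomial
open Finset Polynomial

lemma aux_frob_add (q : ℕ) {F : Type*} [Field F] [Fintype F]
    (hq : IsPrimePow q) (hF : Fintype.card F = q ^ 2) :
    ∀ a b : F, (a + b) ^ q = a ^ q + b ^ q := by
  obtain ⟨p, k, hp, hk, rfl⟩ := hq
  have hp' : p.Prime := hp.nat_prime
  have hcast : ((p : F)) ^ (k * 2) = 0 := by
    have := FiniteField.cast_card_eq_zero F
    rw [hF] at this
    push_cast at this
    rw [← pow_mul] at this
    exact this
  have hp0 : (p : F) = 0 := pow_eq_zero_iff (by positivity) |>.mp hcast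
  have hchar : CharP F p := by
    have h1 : ringChar F ∣ p := ringChar.dvd hp0
    rcases (Nat.Prime.eq_one_or_self_of_dvd hp' _ h1) with h | h
    · exact absurd h (CharP.ringChar_ne_one)
    · rw [← h]; exact ringChar.charP F
  haveI := hchar
  haveI : ExpChar F p := ExpChar.prime hp'
  intro a b
  haveI : Fact p.Prime := ⟨hp'⟩; exact add_pow_char_pow a b p k

lemma aux_root_bound {F : Type*} [Field F] [Fintype F] [DecidableEq F]
    (q : ℕ) (hq2 : 2 ≤ q) (a b : F) :
    (univ.filter fun x : F => x ^ q = a * x + b).card ≤ q := by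
  set P : F[X] := X ^ q - (C a * X + C b) with hP
  have hdeg : P.natDegree = q := by
    rw [hP]
    compute_degree!
    case coeff_ne_zero =>
      have h1 : ¬ q = 1 := by omega
      have h0 : ¬ q = 0 := by omega
      simp [h1, h0]
    all_goals omega
  have hPne : P ≠ 0 := by
    intro h
    rw [h, natDegree_zero] at hdeg
    omega
  calc (univ.filter fun x : F => x ^ q = a * x + b).card
      ≤ P.roots.toFinset.card := by
        apply card_le_card
        intro x hx
        simp only [mem_filter, mem_univ, true_and] at hx
        rw [Multiset.mem_toFinset, mem_roots hPne]
        simp [hP, IsRoot, hx, sub_eq_zero]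
    _ ≤ Multiset.card P.roots := Multiset.toFinset_card_le _
    _ ≤ P.natDegree := card_roots' P
    _ = q := hdeg

lemma aux_fiber {F : Type*} [Field F] [Fintype F] [DecidableEq F]
    (q : ℕ) (hq2 : 2 ≤ q) (hF : Fintype.card F = q ^ 2)
    (hfrob : ∀ a b : F, (a + b) ^ q = a ^ q + b ^ q)
    (t : F) (ht : t ^ q = t) :
    (univ.filter fun x : F => x ^ q + x = t).card = q := by
  have hq0 : 0 < q := by omega
  have hqq : ∀ x : F, (x ^ q) ^ q = x := by
    intro x
    rw [← pow_mul, ← sq, ← hF, FiniteField.pow_card]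
  set T : Finset F := univ.filter (fun s : F => s ^ q = s) with hT
  set I : Finset F := univ.image (fun x : F => x ^ q + x) with hI
  have hIT : I ⊆ T := by
    intro s hs
    rw [hI, mem_image] at hs
    obtain ⟨x, -, rfl⟩ := hs
    rw [hT, mem_filter]
    refine ⟨mem_univ _, ?_⟩
    rw [hfrob, hqq, add_comm]
  have hTcard : T.card ≤ q := by
    have := aux_root_bound q hq2 (1 : F) (0 : F)
    simpa [hT] using this
  have hfib_le : ∀ s : F, (univ.filter fun x : F => x ^ q + x = s).card ≤ q := by
    intro s
    have := aux_root_bound q hq2 (-1 : F) s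
    apply le_trans (le_of_eq ?_) this
    congr 1
    ext x
    simp only [mem_filter, mem_univ, true_and]
    constructor <;> intro h <;> linear_combination h
  have hsum : q ^ 2 = ∑ s ∈ I, (univ.filter fun x : F => x ^ q + x = s).card := by
    rw [← hF, ← card_univ]
    exact card_eq_sum_card_fiberwise (fun x _ => mem_image_of_mem _ (mem_univ x))
  have hIcard : I.card = q := by
    have h1 : I.card ≤ q := le_trans (card_le_card hIT) hTcard
    have h2 : q ^ 2 ≤ I.card * q := by
      rw [hsum]
      calc ∑ s ∈ I, (univ.filter fun x : F => x ^ q + x = s).card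
          ≤ I.card • q := sum_le_card_nsmul _ _ _ (fun s _ => hfib_le s)
        _ = I.card * q := rfl
    nlinarith
  have hTI : I = T := eq_of_subset_of_card_le hIT (by omega)
  have htI : t ∈ I := by
    rw [hTI, hT, mem_filter]; exact ⟨mem_univ _, ht⟩
  by_contra hne
  have hlt : (univ.filter fun x : F => x ^ q + x = t).card < q :=
    lt_of_le_of_ne (hfib_le t) hne
  have : ∑ s ∈ I, (univ.filter fun x : F => x ^ q + x = s).card < ∑ s ∈ I, q :=
    sum_lt_sum (fun s _ => hfib_le s) ⟨t, htI, hlt⟩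
  rw [sum_const, smul_eq_mul, hIcard, ← sq, ← hsum] at this
  omega

lemma aux_B {F : Type*} [Field F] [Fintype F] [DecidableEq F]
    (q : ℕ) (hq2 : 2 ≤ q) (hF : Fintype.card F = q ^ 2)
    (hfib : ∀ t : F, t ^ q = t → (univ.filter fun x : F => x ^ q + x = t).card = q)
    (u : F) (hu : u ≠ 0) (huq : u ^ q = u) :
    (univ.filter fun x : F => x ^ q + x ≠ 0 ∧ x ^ (q+1) = u * (x ^ q + x)).card = q := by
  have hq0 : q ≠ 0 := by omega
  have key : (univ.filter fun x : F => x ^ q + x ≠ 0 ∧ x ^ (q+1) = u * (x ^ q + x)).card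
      = (univ.filter fun z : F => z ^ q + z = 1).card := by
    apply card_nbij' (fun x => u / x) (fun z => u / z)
    · intro x hx
      simp only [mem_coe, mem_filter, mem_univ, true_and] at hx ⊢
      obtain ⟨hTr, heq⟩ := hx
      have hx0 : x ≠ 0 := by rintro rfl; simp [zero_pow hq0] at hTr
      have hxq : x ^ q ≠ 0 := pow_ne_zero _ hx0
      rw [div_pow, huq]
      rw [pow_succ] at heq
      field_simp
      linear_combination -heq
    · intro z hz
      simp only [mem_coe, mem_filter, mem_univ, true_and] at hz ⊢
      have hz0 : z ≠ 0 := by rintro rfl; simp [zero_pow hq0] at hz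
      have hzq : z ^ q ≠ 0 := pow_ne_zero _ hz0
      constructor
      · rw [div_pow, huq]
        field_simp
        intro hc
        rw [add_comm, hz, mul_one] at hc
        exact hu (by simpa [hzq, hz0] using hc)
      · rw [div_pow, div_pow, huq]
        have huq1 : u ^ (q+1) = u * u := by rw [pow_succ, huq]
        have hzq1 : z ^ (q+1) = z ^ q * z := pow_succ z q
        rw [huq1, hzq1]
        field_simp
        linear_combination -hz
    · intro x hx
      simp only [mem_coe, mem_filter, mem_univ, true_and] at hx
      have hx0 : x ≠ 0 := by rintro rfl; simp [zero_pow hq0] at hx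
      field_simp
    · intro z hz
      simp only [mem_coe, mem_filter, mem_univ, true_and] at hz
      have hz0 : z ≠ 0 := by rintro rfl; simp [zero_pow hq0] at hz
      field_simp
  rw [key, hfib 1 (one_pow q)]

/-- Let `q` be an odd prime power, `F` a finite field with `q^2` elements and `β₁ ∈ F`
nonzero with `β₁^q = β₁`. The set of pairs
`{(α, y) : α^q + α ≠ 0 ∧ y^q + y = α^{q+1}/(α^q+α) ∧ y^{q+1} = β₁(y^q+y)}` has exactly
`q^2` elements. -/
theorem stmt_10 (q : ℕ) (hq : IsPrimePow q) (hodd : Odd q) (F : Type*) [Field F] [Fintype F]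
    (hF : Fintype.card F = q ^ 2) (β₁ : F) (hβ : β₁ ≠ 0) (hβq : β₁ ^ q = β₁) :
    {p : F × F | p.1 ^ q + p.1 ≠ 0 ∧
      p.2 ^ q + p.2 = p.1 ^ (q + 1) / (p.1 ^ q + p.1) ∧
      p.2 ^ (q + 1) = β₁ * (p.2 ^ q + p.2)}.ncard = q ^ 2 := by
  classical
  have hq2 : 2 ≤ q := hq.two_le
  have hq0 : q ≠ 0 := by omega
  have hfrob : ∀ a b : F, (a + b) ^ q = a ^ q + b ^ q := aux_frob_add q hq hF
  have hfib : ∀ t : F, t ^ q = t → (univ.filter fun x : F => x ^ q + x = t).card = q :=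
    aux_fiber q hq2 hF hfrob
  have hqq : ∀ x : F, (x ^ q) ^ q = x := by
    intro x
    rw [← pow_mul, ← sq, ← hF, FiniteField.pow_card]
  have hqfix : ∀ x : F, (x ^ q + x) ^ q = x ^ q + x := by
    intro x
    rw [hfrob, hqq, add_comm]
  set Sy : Finset F :=
    univ.filter (fun y : F => y ^ q + y ≠ 0 ∧ y ^ (q+1) = β₁ * (y ^ q + y)) with hSy
  have hSycard : Sy.card = q := aux_B q hq2 hF hfib β₁ hβ hβq
  rw [Set.ncard_eq_toFinset_card', Set.toFinset_setOf]
  set P : Finset (F × F) := univ.filter (fun p : F × F => p.1 ^ q + p.1 ≠ 0 ∧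
      p.2 ^ q + p.2 = p.1 ^ (q + 1) / (p.1 ^ q + p.1) ∧
      p.2 ^ (q + 1) = β₁ * (p.2 ^ q + p.2)) with hP
  have hmem : ∀ p : F × F, p ∈ P → p.2 ∈ Sy := by
    intro p hp
    rw [hP, mem_filter] at hp
    obtain ⟨-, h1, h2, h3⟩ := hp
    rw [hSy, mem_filter]
    refine ⟨mem_univ _, ?_, h3⟩
    intro hTy
    rw [hTy] at h2
    have hN : p.1 ^ (q+1) = 0 := by
      rcases div_eq_zero_iff.mp h2.symm with h | h
      · exact h
      · exact absurd h h1
    exact h1 (by simp [pow_eq_zero_iff (by omega : q + 1 ≠ 0) |>.mp hN, zero_pow hq0])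
  rw [card_eq_sum_card_fiberwise hmem]
  have hfibP : ∀ y ∈ Sy, (P.filter (fun p => p.2 = y)).card = q := by
    intro y hy
    rw [hSy, mem_filter] at hy
    obtain ⟨-, hTy, hNy⟩ := hy
    have hA : (univ.filter fun α : F => α ^ q + α ≠ 0 ∧
        α ^ (q+1) = (y ^ q + y) * (α ^ q + α)).card = q :=
      aux_B q hq2 hF hfib (y ^ q + y) hTy (hqfix y)
    rw [← hA]
    apply card_nbij' (fun p => p.1) (fun α => (α, y))
    · intro p hp
      rw [mem_coe, mem_filter, hP, mem_filter] at hp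
      obtain ⟨⟨-, h1, h2, h3⟩, hpy⟩ := hp
      rw [mem_coe, mem_filter]
      refine ⟨mem_univ _, h1, ?_⟩
      rw [← hpy]
      rw [eq_comm, div_eq_iff h1, eq_comm, mul_comm] at h2
      rw [mul_comm]
      exact h2.symm
    · intro α hα
      rw [mem_coe, mem_filter] at hα
      obtain ⟨-, h1, h2⟩ := hα
      rw [mem_coe, mem_filter, hP, mem_filter]
      refine ⟨⟨mem_univ _, h1, ?_, hNy⟩, rfl⟩
      rw [eq_div_iff h1]
      linear_combination -h2
    · intro p hp
      rw [mem_coe, mem_filter] at hp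
      rw [← hp.2]
    · intro α hα
      rfl
  rw [sum_congr rfl hfibP, sum_const, hSycard, smul_eq_mul, sq]
end

section
/- Let q ≥ 5 be an odd prime power and let l be an integer with 1 ≤ l ≤ (q−1)(q−2). Set R = (l+1)/q^2 (a real number), and let δ be any real number with δ ≥ ((q−1)(q−2) − l + 1)/(q^2 − q). Then R > ((q−1)/q)·(1 − δ − 2/q). -/
/-- Proposition 5.2: for `q ≥ 5` an odd prime power and `1 ≤ l ≤ (q-1)(q-2)`, with
`R = (l+1)/q²` and any `δ ≥ ((q-1)(q-2)-l+1)/(q²-q)`, one has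
`R > ((q-1)/q)(1 - δ - 2/q)`. -/
theorem stmt_12 (q l : ℕ) (hq : IsPrimePow q) (hodd : Odd q) (hq5 : 5 ≤ q)
    (hl1 : 1 ≤ l) (hlu : l ≤ (q - 1) * (q - 2))
    (R δ : ℝ) (hR : R = ((l : ℝ) + 1) / (q : ℝ) ^ 2)
    (hδ : δ ≥ (((q : ℝ) - 1) * ((q : ℝ) - 2) - (l : ℝ) + 1) / ((q : ℝ) ^ 2 - q)) :
    R > (((q : ℝ) - 1) / q) * (1 - δ - 2 / q) := by
  have hQ : (5 : ℝ) ≤ (q : ℝ) := by exact_mod_cast hq5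
  have hQ0 : (0 : ℝ) < (q : ℝ) := by linarith
  have hden : (0 : ℝ) < (q : ℝ) ^ 2 - q := by nlinarith
  have hδ' : δ * ((q : ℝ) ^ 2 - q) ≥ ((q : ℝ) - 1) * ((q : ℝ) - 2) - (l : ℝ) + 1 := by
    rw [ge_iff_le, ← div_le_iff₀ hden] at *
    exact hδ
  subst hR
  have hexp : ((q : ℝ) - 1) / q * (1 - δ - 2 / q)
      = (((q : ℝ) - 1) * ((q : ℝ) * (1 - δ) - 2)) / (q : ℝ) ^ 2 := by
    field_simp
  rw [gt_iff_lt, hexp, div_lt_div_iff₀ (by positivity) (by positivity)]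
  nlinarith [hδ', hQ0]
end
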